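/- arXiv:1111.0146 — 6 statements merged into one kernel-verified Lean document; each statement's English description precedes it below -/
import Mathlib

section
/- For all n ∈ ℕ and all integers r ≥ 1, D(n+1, r) = D(n, r−1) + D(n, r+1). -/
/-- `k(n, λ)` from Proposition `prop:sbafacts` of the paper. -/
def kfun (n : ℕ) (l : ℤ) : ℤ :=
  if l = 0 then (n : ℤ)
  else if ((n : ℤ) + l) % 2 = 0 then
    (if l < 0 then ((n : ℤ) + l) / 2 else ((n : ℤ) - l - 2) / 2)
  else ((n : ℤ) - |l| - 1) / 2

/-- `D(n, r)`: for `r = 0` it is `2 ^ n`, and for `r ≥ 1` it is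
`Σ_{i=0}^{k(n,r)} C(n,i) + Σ_{i=0}^{k(n,−r)} C(n,i)`, where a sum with a
negative upper limit is empty (hence `0`). -/
noncomputable def Dfun (n r : ℕ) : ℤ :=
  if r = 0 then 2 ^ n
  else (∑ i ∈ Finset.Icc (0 : ℤ) (kfun n (r : ℤ)), (n.choose i.toNat : ℤ)) +
       (∑ i ∈ Finset.Icc (0 : ℤ) (kfun n (-(r : ℤ))), (n.choose i.toNat : ℤ))

noncomputable def S (n : ℕ) (k : ℤ) : ℤ := ∑ i ∈ Finset.Icc (0 : ℤ) k, (n.choose i.toNat : ℤ)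

lemma S_neg (n : ℕ) (k : ℤ) (h : k < 0) : S n k = 0 := by
  unfold S
  rw [Finset.Icc_eq_empty (by omega)]
  simp

lemma S_zero_k (n : ℕ) : S n 0 = 1 := by simp [S]

lemma S_succ (n : ℕ) (k : ℤ) (h : 0 ≤ k) :
    S n (k + 1) = S n k + (n.choose (k + 1).toNat : ℤ) := by
  unfold S
  have hins : Finset.Icc (0 : ℤ) (k + 1) = insert (k + 1) (Finset.Icc 0 k) := by
    ext x
    simp only [Finset.mem_Icc, Finset.mem_insert]
    omega
  rw [hins, Finset.sum_insert (by simp only [Finset.mem_Icc]; omega)]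
  ring

lemma S_pascal (n : ℕ) (k : ℤ) : S (n + 1) k = S n k + S n (k - 1) := by
  rcases lt_or_ge k 0 with h | h
  · rw [S_neg _ _ h, S_neg _ _ h, S_neg _ _ (by omega)]; ring
  · obtain ⟨m, rfl⟩ := Int.eq_ofNat_of_zero_le h
    clear h
    induction m with
    | zero => simp [S_zero_k, S_neg n (-1) (by norm_num)]
    | succ m ih =>
        have hm1 : ((m + 1 : ℕ) : ℤ) = (m : ℤ) + 1 := by push_cast; ring
        rw [hm1, S_succ _ _ (by positivity), S_succ _ _ (by positivity),
          show (m : ℤ) + 1 - 1 = (m : ℤ) by ring, ih]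
        have ht : ((m : ℤ) + 1).toNat = m + 1 := by omega
        rw [ht]
        rcases Nat.eq_zero_or_pos m with rfl | hm
        · norm_num [S_zero_k, S_neg n (-1) (by norm_num : (-1:ℤ) < 0)]
          ring
        · have hs : S n (m : ℤ) = S n ((m : ℤ) - 1) + (n.choose m : ℤ) := by
            have := S_succ n ((m : ℤ) - 1) (by omega)
            rw [show (m : ℤ) - 1 + 1 = (m : ℤ) by ring] at this
            rw [this, show ((m : ℤ)).toNat = m by omega]
          rw [hs]
          push_cast [Nat.choose_succ_succ n m]
          ring

lemma S_top (k : ℤ) (h : 0 ≤ k) : S 0 k = 1 := by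
  obtain ⟨m, rfl⟩ := Int.eq_ofNat_of_zero_le h
  induction m with
  | zero => exact S_zero_k 0
  | succ m ih =>
      have hm1 : ((m + 1 : ℕ) : ℤ) = (m : ℤ) + 1 := by push_cast; ring
      rw [hm1, S_succ _ _ (by positivity), ih (by positivity),
        show ((m : ℤ) + 1).toNat = m + 1 by omega]
      simp [Nat.choose]

lemma S_sym (n : ℕ) (k : ℤ) : S n k + S n ((n : ℤ) - 1 - k) = 2 ^ n := by
  induction n generalizing k with
  | zero =>
      rcases lt_or_ge k 0 with h | h
      · rw [S_neg _ _ h, S_top _ (by omega)]; norm_num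
      · rw [S_top _ h, S_neg _ _ (by push_cast; omega)]; norm_num
  | succ n ih =>
      rw [S_pascal, S_pascal]
      have e1 : S n (((n + 1 : ℕ) : ℤ) - 1 - k) = S n ((n : ℤ) - 1 - (k - 1)) :=
        congrArg (S n) (by push_cast; ring)
      have e2 : S n (((n + 1 : ℕ) : ℤ) - 1 - k - 1) = S n ((n : ℤ) - 1 - k) :=
        congrArg (S n) (by push_cast; ring)
      rw [e1, e2]
      have h1 := ih k
      have h2 := ih (k - 1)
      have hp : (2 : ℤ) ^ (n + 1) = 2 ^ n + 2 ^ n := by ring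
      rw [hp]
      linarith

lemma kfun_char (n : ℕ) (r : ℤ) (h : 1 ≤ r) :
    2 * kfun n r = (n : ℤ) - r - 2 + ((n : ℤ) + r) % 2 ∧
    2 * kfun n (-r) = (n : ℤ) - r - ((n : ℤ) + r) % 2 := by
  have h1 : |r| = r := abs_of_pos (by omega)
  have h2 : |(-r)| = r := by rw [abs_neg]; exact h1
  unfold kfun
  rw [h1, h2]
  split_ifs <;> omega

lemma Dfun_eq (n r : ℕ) (h : r ≠ 0) :
    Dfun n r = S n (kfun n (r : ℤ)) + S n (kfun n (-(r : ℤ))) := by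
  rw [Dfun, if_neg h]; rfl

lemma Dfun_zero (n : ℕ) : Dfun n 0 = 2 ^ n := by simp [Dfun]

/-- For all `n ∈ ℕ` and all `r ≥ 1`, `D(n+1, r) = D(n, r−1) + D(n, r+1)`. -/
theorem Dfun_recurrence (n r : ℕ) (hr : 1 ≤ r) :
    Dfun (n + 1) r = Dfun n (r - 1) + Dfun n (r + 1) := by
  have hr0 : r ≠ 0 := by omega
  obtain ⟨hA1, hA2⟩ := kfun_char (n + 1) (r : ℤ) (by exact_mod_cast hr)
  obtain ⟨hC1, hC2⟩ := kfun_char n ((r : ℤ) + 1) (by omega)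
  have hcast1 : (((r + 1 : ℕ)) : ℤ) = (r : ℤ) + 1 := by push_cast; ring
  rw [Dfun_eq (n + 1) r hr0, Dfun_eq n (r + 1) (by omega), S_pascal, S_pascal, hcast1]
  have e3 : kfun n ((r : ℤ) + 1) = kfun (n + 1) (r : ℤ) - 1 := by omega
  have e4 : kfun n (-((r : ℤ) + 1)) = kfun (n + 1) (-(r : ℤ)) - 1 := by omega
  rw [e3, e4]
  rcases eq_or_lt_of_le hr with h1 | h2
  · -- r = 1
    subst h1
    norm_num [Dfun_zero]
    simp only [Nat.cast_one] at hA1 hA2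
    have ha2 : kfun (n + 1) (-(1 : ℤ)) = (n : ℤ) - 1 - kfun (n + 1) (1 : ℤ) := by omega
    rw [ha2]
    have hs := S_sym n (kfun (n + 1) (1 : ℤ))
    linarith
  · -- r ≥ 2
    obtain ⟨hB1, hB2⟩ := kfun_char n ((r : ℤ) - 1) (by omega)
    have hcast2 : (((r - 1 : ℕ)) : ℤ) = (r : ℤ) - 1 := by omega
    rw [Dfun_eq n (r - 1) (by omega), hcast2]
    have e1 : kfun n ((r : ℤ) - 1) = kfun (n + 1) (r : ℤ) := by omega
    have e2 : kfun n (-((r : ℤ) - 1)) = kfun (n + 1) (-(r : ℤ)) := by omega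
    rw [e1, e2]
    ring
end

section
/- If D' : ℕ × ℕ → ℤ satisfies D'(n,0) = 2^n for all n ∈ ℕ, D'(0,r) = 0 for all r ≥ 1, and D'(n+1,r) = D'(n,r−1) + D'(n,r+1) for all n ∈ ℕ and all r ≥ 1, then D'(n,r) = D(n,r) for all n, r ∈ ℕ. -/
noncomputable def Sz (n : ℕ) (k : ℤ) : ℤ := ∑ i ∈ Finset.Icc (0 : ℤ) k, (n.choose i.toNat : ℤ)

def T (n m : ℕ) : ℤ := ∑ i ∈ Finset.range (m + 1), (n.choose i : ℤ)

lemma Sz_neg {n : ℕ} {k : ℤ} (h : k < 0) : Sz n k = 0 := by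
  unfold Sz
  rw [Finset.Icc_eq_empty (by omega), Finset.sum_empty]

lemma Sz_coe (n m : ℕ) : Sz n (m : ℤ) = T n m := by
  unfold Sz T
  induction m with
  | zero => simp
  | succ m ih =>
    have : ((m + 1 : ℕ) : ℤ) = (m : ℤ) + 1 := by push_cast; ring
    rw [this, show Finset.Icc (0:ℤ) ((m:ℤ)+1) = insert ((m:ℤ)+1) (Finset.Icc 0 (m:ℤ)) by
      ext x; simp [Finset.mem_Icc]; omega, Finset.sum_insert (by simp),
      Finset.sum_range_succ, ih]
    simp [add_comm]

lemma T_pascal (n m : ℕ) : T (n + 1) (m + 1) = T n (m + 1) + T n m := by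
  unfold T
  rw [Finset.sum_range_succ' (fun i => (((n+1).choose i : ℕ) : ℤ))]
  rw [Finset.sum_range_succ' (fun i => ((n.choose i : ℕ) : ℤ))]
  simp only [Nat.choose_succ_succ, Nat.cast_add, Finset.sum_add_distrib, Nat.choose_zero_right,
    Nat.cast_one]
  ring

lemma T_ge (n m : ℕ) (h : n ≤ m) : T n m = 2 ^ n := by
  unfold T
  rw [show Finset.range (m+1) = Finset.range (n+1) ∪ Finset.Ico (n+1) (m+1) by
    simp only [Finset.range_eq_Ico]
    exact (Finset.Ico_union_Ico_eq_Ico (by omega) (by omega)).symm]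
  rw [Finset.sum_union (by rw [Finset.range_eq_Ico]; exact Finset.Ico_disjoint_Ico_consecutive 0 (n+1) (m+1))]
  rw [Finset.sum_Ico_eq_sum_range]
  have : ∀ i ∈ Finset.range (m+1-(n+1)), ((n.choose (n+1+i) : ℕ) : ℤ) = 0 := by
    intro i _; rw [Nat.choose_eq_zero_of_lt (by omega)]; simp
  rw [Finset.sum_congr rfl this, Finset.sum_const_zero, add_zero]
  rw [show (∑ i ∈ Finset.range (n+1), ((n.choose i : ℕ) : ℤ)) = ((∑ i ∈ Finset.range (n+1), n.choose i : ℕ) : ℤ) by push_cast; ring]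
  rw [Nat.sum_range_choose]; push_cast; ring

lemma T_total (n a b : ℕ) (h : a + b + 1 = n) : T n a + T n b = 2 ^ n := by
  unfold T
  have hb : (∑ i ∈ Finset.range (b+1), ((n.choose i : ℕ) : ℤ))
      = ∑ i ∈ Finset.Ico (a+1) (n+1), ((n.choose i : ℕ) : ℤ) := by
    rw [Finset.sum_Ico_eq_sum_range]
    rw [show n + 1 - (a+1) = b + 1 by omega]
    rw [← Finset.sum_range_reflect (fun j => ((n.choose (a+1+j) : ℕ) : ℤ)) (b+1)]
    apply Finset.sum_congr rfl
    intro i hi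
    simp only [Finset.mem_range] at hi
    rw [show a + 1 + (b + 1 - 1 - i) = n - i by omega,
      Nat.choose_symm (show i ≤ n by omega)]
  rw [hb, ← Finset.sum_union]
  · rw [show Finset.range (a+1) ∪ Finset.Ico (a+1) (n+1) = Finset.range (n+1) by
      simp only [Finset.range_eq_Ico]
      exact Finset.Ico_union_Ico_eq_Ico (by omega) (by omega)]
    rw [show (∑ i ∈ Finset.range (n+1), ((n.choose i : ℕ) : ℤ)) = ((∑ i ∈ Finset.range (n+1), n.choose i : ℕ) : ℤ) by push_cast; ring]
    rw [Nat.sum_range_choose]; push_cast; ring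
  · rw [Finset.range_eq_Ico]; exact Finset.Ico_disjoint_Ico_consecutive 0 (a+1) (n+1)

lemma Sz_pascal (n : ℕ) (k : ℤ) : Sz (n + 1) k = Sz n k + Sz n (k - 1) := by
  rcases lt_trichotomy k 0 with h | h | h
  · rw [Sz_neg h, Sz_neg h, Sz_neg (by omega)]; ring
  · subst h
    rw [Sz_neg (by omega : (0:ℤ) - 1 < 0)]
    rw [show (0:ℤ) = ((0:ℕ):ℤ) by simp, Sz_coe, Sz_coe]
    simp [T]
  · obtain ⟨m, rfl⟩ : ∃ m : ℕ, k = ((m : ℤ) + 1) := ⟨(k-1).toNat, by omega⟩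
    rw [show (m:ℤ) + 1 = ((m+1:ℕ):ℤ) by push_cast; ring, Sz_coe,
      show ((m+1:ℕ):ℤ) - 1 = ((m:ℕ):ℤ) by push_cast; ring, Sz_coe, Sz_coe, T_pascal]

lemma Sz_total (n : ℕ) : ∀ a b : ℤ, a + b = (n : ℤ) - 1 → Sz n a + Sz n b = 2 ^ n := by
  have key : ∀ a b : ℤ, a ≤ b → a + b = (n : ℤ) - 1 → Sz n a + Sz n b = 2 ^ n := by
    intro a b hab h
    rcases lt_or_ge a 0 with ha | ha
    · rw [Sz_neg ha]
      have hb : (n : ℤ) ≤ b := by omega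
      rw [show b = ((b.toNat : ℕ) : ℤ) by omega, Sz_coe, T_ge n b.toNat (by omega)]
      ring
    · rw [show a = ((a.toNat : ℕ) : ℤ) by omega, show b = ((b.toNat : ℕ) : ℤ) by omega,
        Sz_coe, Sz_coe, T_total n a.toNat b.toNat (by omega)]
  intro a b h
  rcases le_total a b with hab | hab
  · exact key a b hab h
  · rw [add_comm]; exact key b a hab (by omega)

lemma kfun_pos_even {n r : ℕ} (hr : 1 ≤ r) (hp : ((n:ℤ) + r) % 2 = 0) :
    2 * kfun n (r : ℤ) = (n : ℤ) - r - 2 := by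
  unfold kfun
  simp only [Nat.abs_cast]
  split_ifs <;> omega

lemma kfun_pos_odd {n r : ℕ} (hr : 1 ≤ r) (hp : ((n:ℤ) + r) % 2 ≠ 0) :
    2 * kfun n (r : ℤ) = (n : ℤ) - r - 1 := by
  unfold kfun
  simp only [Nat.abs_cast]
  split_ifs <;> omega

lemma kfun_neg_even {n r : ℕ} (hr : 1 ≤ r) (hp : ((n:ℤ) + r) % 2 = 0) :
    2 * kfun n (-(r : ℤ)) = (n : ℤ) - r := by
  unfold kfun
  simp only [abs_neg, Nat.abs_cast]
  split_ifs <;> omega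

lemma kfun_neg_odd {n r : ℕ} (hr : 1 ≤ r) (hp : ((n:ℤ) + r) % 2 ≠ 0) :
    2 * kfun n (-(r : ℤ)) = (n : ℤ) - r - 1 := by
  unfold kfun
  simp only [abs_neg, Nat.abs_cast]
  split_ifs <;> omega

lemma Dfun' (n r : ℕ) (hr : r ≠ 0) :
    (if r = 0 then (2:ℤ) ^ n else
      (∑ i ∈ Finset.Icc (0 : ℤ) (kfun n (r : ℤ)), (n.choose i.toNat : ℤ)) +
      (∑ i ∈ Finset.Icc (0 : ℤ) (kfun n (-(r : ℤ))), (n.choose i.toNat : ℤ)))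
    = Sz n (kfun n (r : ℤ)) + Sz n (kfun n (-(r : ℤ))) := by
  rw [if_neg hr]; rfl

lemma Dfun_succ_aux (n r : ℕ) (hr : 1 ≤ r) :
    Sz (n+1) (kfun (n+1) (r : ℤ)) + Sz (n+1) (kfun (n+1) (-(r : ℤ)))
    = (if r - 1 = 0 then (2:ℤ)^n else
        Sz n (kfun n ((r-1 : ℕ) : ℤ)) + Sz n (kfun n (-((r-1:ℕ) : ℤ))))
      + (Sz n (kfun n ((r+1 : ℕ) : ℤ)) + Sz n (kfun n (-((r+1:ℕ) : ℤ)))) := by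
  rcases Nat.lt_or_ge r 2 with h2 | h2
  · -- r = 1
    obtain rfl : r = 1 := by omega
    rw [if_pos rfl]
    rw [Sz_pascal, Sz_pascal]
    by_cases hp : ((n:ℤ) + 1) % 2 = 0
    · -- n odd
      have hA := kfun_pos_odd (n := n+1) (r := 1) le_rfl (by push_cast; omega)
      have hB := kfun_neg_odd (n := n+1) (r := 1) le_rfl (by push_cast; omega)
      have hE := kfun_pos_odd (n := n) (r := 2) (by omega) (by push_cast; omega)
      have hE' := kfun_neg_odd (n := n) (r := 2) (by omega) (by push_cast; omega)
      rw [show kfun (n+1) (-((1:ℕ):ℤ)) = kfun (n+1) ((1:ℕ):ℤ) by push_cast at *; omega,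
        show kfun n (((1+1:ℕ)):ℤ) = kfun (n+1) ((1:ℕ):ℤ) - 1 by push_cast at *; omega,
        show kfun n (-((1+1:ℕ):ℤ)) = kfun (n+1) ((1:ℕ):ℤ) - 1 by push_cast at *; omega]
      have ht := Sz_total n (kfun (n+1) ((1:ℕ):ℤ)) (kfun (n+1) ((1:ℕ):ℤ))
        (by push_cast at *; omega)
      linarith
    · -- n even
      have hA := kfun_pos_even (n := n+1) (r := 1) le_rfl (by push_cast; omega)
      have hB := kfun_neg_even (n := n+1) (r := 1) le_rfl (by push_cast; omega)
      have hE := kfun_pos_even (n := n) (r := 2) (by omega) (by push_cast; omega)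
      have hE' := kfun_neg_even (n := n) (r := 2) (by omega) (by push_cast; omega)
      rw [show kfun (n+1) (-((1:ℕ):ℤ)) = kfun (n+1) ((1:ℕ):ℤ) + 1 by push_cast at *; omega,
        show kfun n (((1+1:ℕ)):ℤ) = kfun (n+1) ((1:ℕ):ℤ) - 1 by push_cast at *; omega,
        show kfun n (-((1+1:ℕ):ℤ)) = kfun (n+1) ((1:ℕ):ℤ) by push_cast at *; omega]
      have ht := Sz_total n (kfun (n+1) ((1:ℕ):ℤ)) (kfun (n+1) ((1:ℕ):ℤ) + 1)
        (by push_cast at *; omega)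
      rw [show kfun (n+1) ((1:ℕ):ℤ) + 1 - 1 = kfun (n+1) ((1:ℕ):ℤ) by ring]
      linarith
  · -- r ≥ 2
    obtain ⟨s, rfl⟩ : ∃ s, r = s + 2 := ⟨r - 2, by omega⟩
    rw [if_neg (by omega), show s + 2 - 1 = s + 1 from rfl]
    rw [Sz_pascal, Sz_pascal]
    by_cases hp : ((n:ℤ) + (s:ℤ) + 2) % 2 = 0
    · have hA := kfun_pos_odd (n := n+1) (r := s+2) (by omega) (by push_cast; omega)
      have hB := kfun_neg_odd (n := n+1) (r := s+2) (by omega) (by push_cast; omega)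
      have hC := kfun_pos_odd (n := n) (r := s+1) (by omega) (by push_cast; omega)
      have hC' := kfun_neg_odd (n := n) (r := s+1) (by omega) (by push_cast; omega)
      have hE := kfun_pos_odd (n := n) (r := s+2+1) (by omega) (by push_cast; omega)
      have hE' := kfun_neg_odd (n := n) (r := s+2+1) (by omega) (by push_cast; omega)
      rw [show kfun (n+1) (-((s+2:ℕ):ℤ)) = kfun (n+1) ((s+2:ℕ):ℤ) by push_cast at *; omega,
        show kfun n ((s+1:ℕ):ℤ) = kfun (n+1) ((s+2:ℕ):ℤ) by push_cast at *; omega,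
        show kfun n (-((s+1:ℕ):ℤ)) = kfun (n+1) ((s+2:ℕ):ℤ) by push_cast at *; omega,
        show kfun n ((s+2+1:ℕ):ℤ) = kfun (n+1) ((s+2:ℕ):ℤ) - 1 by push_cast at *; omega,
        show kfun n (-((s+2+1:ℕ):ℤ)) = kfun (n+1) ((s+2:ℕ):ℤ) - 1 by push_cast at *; omega]
      ring
    · have hA := kfun_pos_even (n := n+1) (r := s+2) (by omega) (by push_cast; omega)
      have hB := kfun_neg_even (n := n+1) (r := s+2) (by omega) (by push_cast; omega)
      have hC := kfun_pos_even (n := n) (r := s+1) (by omega) (by push_cast; omega)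
      have hC' := kfun_neg_even (n := n) (r := s+1) (by omega) (by push_cast; omega)
      have hE := kfun_pos_even (n := n) (r := s+2+1) (by omega) (by push_cast; omega)
      have hE' := kfun_neg_even (n := n) (r := s+2+1) (by omega) (by push_cast; omega)
      rw [show kfun (n+1) (-((s+2:ℕ):ℤ)) = kfun (n+1) ((s+2:ℕ):ℤ) + 1 by push_cast at *; omega,
        show kfun n ((s+1:ℕ):ℤ) = kfun (n+1) ((s+2:ℕ):ℤ) by push_cast at *; omega,
        show kfun n (-((s+1:ℕ):ℤ)) = kfun (n+1) ((s+2:ℕ):ℤ) + 1 by push_cast at *; omega,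
        show kfun n ((s+2+1:ℕ):ℤ) = kfun (n+1) ((s+2:ℕ):ℤ) - 1 by push_cast at *; omega,
        show kfun n (-((s+2+1:ℕ):ℤ)) = kfun (n+1) ((s+2:ℕ):ℤ) by push_cast at *; omega,
        show kfun (n+1) ((s+2:ℕ):ℤ) + 1 - 1 = kfun (n+1) ((s+2:ℕ):ℤ) by ring]
      ring

lemma Dfun_zero_left {r : ℕ} (hr : 1 ≤ r) :
    Sz 0 (kfun 0 (r : ℤ)) + Sz 0 (kfun 0 (-(r : ℤ))) = 0 := by
  by_cases hp : (((0:ℕ):ℤ) + r) % 2 = 0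
  · have h1 := kfun_pos_even (n := 0) hr hp
    have h2 := kfun_neg_even (n := 0) hr hp
    rw [Sz_neg (by omega), Sz_neg (by omega), add_zero]
  · have h1 := kfun_pos_odd (n := 0) hr hp
    have h2 := kfun_neg_odd (n := 0) hr hp
    rw [Sz_neg (by omega), Sz_neg (by omega), add_zero]

theorem Dfun_unique' (D' : ℕ → ℕ → ℤ)
    (h0 : ∀ n : ℕ, D' n 0 = 2 ^ n)
    (h1 : ∀ r : ℕ, 1 ≤ r → D' 0 r = 0)
    (h2 : ∀ (n r : ℕ), 1 ≤ r → D' (n + 1) r = D' n (r - 1) + D' n (r + 1)) :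
    ∀ (n r : ℕ), D' n r =
      (if r = 0 then (2:ℤ) ^ n else
        (∑ i ∈ Finset.Icc (0 : ℤ) (kfun n (r : ℤ)), (n.choose i.toNat : ℤ)) +
        (∑ i ∈ Finset.Icc (0 : ℤ) (kfun n (-(r : ℤ))), (n.choose i.toNat : ℤ))) := by
  intro n
  induction n with
  | zero =>
    intro r
    rcases Nat.eq_zero_or_pos r with rfl | hr
    · rw [if_pos rfl, h0]
    · rw [Dfun' 0 r (by omega), h1 r hr, Dfun_zero_left hr]
  | succ n ih =>
    intro r
    rcases Nat.eq_zero_or_pos r with rfl | hr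
    · rw [if_pos rfl, h0]
    · rw [Dfun' (n+1) r (by omega), h2 n r hr, ih (r-1), ih (r+1),
        Dfun_succ_aux n r hr]
      rfl

/-- If `D' : ℕ × ℕ → ℤ` satisfies `D'(n,0) = 2^n`, `D'(0,r) = 0` for `r ≥ 1`, and
`D'(n+1,r) = D'(n,r−1) + D'(n,r+1)` for all `n` and all `r ≥ 1`, then `D' = D`. -/
theorem Dfun_unique (D' : ℕ → ℕ → ℤ)
    (h0 : ∀ n : ℕ, D' n 0 = 2 ^ n)
    (h1 : ∀ r : ℕ, 1 ≤ r → D' 0 r = 0)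
    (h2 : ∀ (n r : ℕ), 1 ≤ r → D' (n + 1) r = D' n (r - 1) + D' n (r + 1)) :
    ∀ (n r : ℕ), D' n r = Dfun n r := by
  exact Dfun_unique' D' h0 h1 h2
end

section
/- If w : ℕ → ℤ satisfies Σ_{r=0}^{n} w(r)·D(n,r) = 16^n for all n ∈ ℕ, then w(r) = v(r) for all r ∈ ℕ. -/
/-- The integer sequence `v`: `v(0)=1`, `v(1)=14`, `v(2)=224`, and for `m ≥ 2`,
`v(m+1) = 16·v(m) − v(m−1)`. -/
def vseq : ℕ → ℤ
  | 0 => 1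
  | 1 => 14
  | 2 => 224
  | (m + 3) => 16 * vseq (m + 2) - vseq (m + 1)

def Aseq : ℕ → ℤ
  | 0 => 1
  | 1 => 8
  | (m + 2) => 16 * Aseq (m + 1) - Aseq m

def fA : ℤ → ℤ := fun m => Aseq m.natAbs

lemma fA_rel (m : ℤ) : fA (m + 1) + fA (m - 1) = 16 * fA m := by
  have key : ∀ k : ℕ, Aseq (k + 2) + Aseq k = 16 * Aseq (k + 1) := by
    intro k; rw [Aseq]; ring
  rcases lt_trichotomy m 0 with h | h | h
  · obtain ⟨k, hk⟩ : ∃ k : ℕ, m = -(k : ℤ) - 1 := ⟨(-m-1).toNat, by omega⟩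
    simp only [fA]
    have e1 : (m+1).natAbs = k := by omega
    have e2 : (m-1).natAbs = k + 2 := by omega
    have e3 : m.natAbs = k + 1 := by omega
    rw [e1, e2, e3]
    have := key k; linarith
  · subst h
    have e1 : ((0:ℤ)+1).natAbs = 1 := by omega
    have e2 : ((0:ℤ)-1).natAbs = 1 := by omega
    have e3 : (0:ℤ).natAbs = 0 := rfl
    simp only [fA, e1, e2, e3]
    show Aseq 1 + Aseq 1 = 16 * Aseq 0
    simp [Aseq]
  · obtain ⟨k, hk⟩ : ∃ k : ℕ, m = (k : ℤ) + 1 := ⟨(m-1).toNat, by omega⟩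
    simp only [fA]
    have e1 : (m+1).natAbs = k + 2 := by omega
    have e2 : (m-1).natAbs = k := by omega
    have e3 : m.natAbs = k + 1 := by omega
    rw [e1, e2, e3]; exact key k

lemma sum_f (f : ℤ → ℤ) (hf : ∀ m : ℤ, f (m + 1) + f (m - 1) = 16 * f m) :
    ∀ n : ℕ, ∑ j ∈ Finset.range (n + 1), (n.choose j : ℤ) * f ((n : ℤ) - 2 * j) = 16 ^ n * f 0 := by
  intro n
  induction n with
  | zero => simp
  | succ n ih =>
    rw [Finset.sum_range_succ'] -- peel j = 0
    have step : ∀ j ∈ Finset.range (n + 1),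
        (((n+1):ℕ).choose (j+1) : ℤ) * f (((n+1:ℕ) : ℤ) - 2 * ((j+1:ℕ) : ℤ)) =
        (n.choose j : ℤ) * f (((n : ℤ) - 2*(j:ℤ)) - 1) + (n.choose (j+1) : ℤ) * f ((n:ℤ) - 2*(j:ℤ) - 1) := by
      intro j _
      have hc : (((n+1):ℕ).choose (j+1) : ℤ) = (n.choose j : ℤ) + (n.choose (j+1) : ℤ) := by
        exact_mod_cast Nat.choose_succ_succ n j
      rw [hc]
      have harg : ((n+1:ℕ) : ℤ) - 2 * ((j+1:ℕ) : ℤ) = (n:ℤ) - 2*(j:ℤ) - 1 := by push_cast; ring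
      rw [harg]; ring
    rw [Finset.sum_congr rfl step, Finset.sum_add_distrib]
    -- handle second sum: reindex
    have hT : ∑ j ∈ Finset.range (n + 1), (n.choose (j+1) : ℤ) * f ((n:ℤ) - 2*(j:ℤ) - 1)
        = (∑ j ∈ Finset.range (n + 1), (n.choose j : ℤ) * f (((n:ℤ) - 2*(j:ℤ)) + 1)) - f ((n:ℤ)+1) := by
      have h2 : ∑ j ∈ Finset.range (n + 2), (n.choose j : ℤ) * f ((n:ℤ) - 2*(j:ℤ) + 1)
          = (∑ j ∈ Finset.range (n + 1), (n.choose (j+1) : ℤ) * f ((n:ℤ) - 2*((j+1:ℕ):ℤ) + 1))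
            + (n.choose 0 : ℤ) * f ((n:ℤ) - 2*((0:ℕ):ℤ) + 1) := Finset.sum_range_succ' _ _
      have h3 : ∑ j ∈ Finset.range (n + 2), (n.choose j : ℤ) * f ((n:ℤ) - 2*(j:ℤ) + 1)
          = (∑ j ∈ Finset.range (n + 1), (n.choose j : ℤ) * f ((n:ℤ) - 2*(j:ℤ) + 1))
            + (n.choose (n+1) : ℤ) * f ((n:ℤ) - 2*((n+1:ℕ):ℤ) + 1) := Finset.sum_range_succ _ _
      rw [Nat.choose_succ_self] at h3
      have h4 : ∀ j ∈ Finset.range (n+1), (n.choose (j+1) : ℤ) * f ((n:ℤ) - 2*((j+1:ℕ):ℤ) + 1)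
          = (n.choose (j+1) : ℤ) * f ((n:ℤ) - 2*(j:ℤ) - 1) := by
        intro j _
        have : (n:ℤ) - 2*((j+1:ℕ):ℤ) + 1 = (n:ℤ) - 2*(j:ℤ) - 1 := by push_cast; ring
        rw [this]
      rw [Finset.sum_congr rfl h4] at h2
      simp only [Nat.choose_zero_right, Nat.cast_one, Nat.cast_zero, Nat.cast_ofNat, one_mul] at h2 h3
      rw [h3] at h2
      norm_num at h2 h3 ⊢
      linarith
    rw [hT]
    have comb : (∑ j ∈ Finset.range (n + 1), (n.choose j : ℤ) * f (((n:ℤ) - 2*(j:ℤ)) - 1))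
        + (∑ j ∈ Finset.range (n + 1), (n.choose j : ℤ) * f (((n:ℤ) - 2*(j:ℤ)) + 1))
        = 16 * ∑ j ∈ Finset.range (n + 1), (n.choose j : ℤ) * f ((n:ℤ) - 2*(j:ℤ)) := by
      rw [← Finset.sum_add_distrib, Finset.mul_sum]
      refine Finset.sum_congr rfl fun j _ => ?_
      linear_combination (n.choose j : ℤ) * hf ((n:ℤ) - 2*(j:ℤ))
    have hch0 : (((n+1):ℕ).choose 0 : ℤ) = 1 := by norm_num
    have harg0 : ((n+1:ℕ) : ℤ) - 2 * ((0:ℕ):ℤ) = (n:ℤ) + 1 := by push_cast; ring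
    rw [hch0, harg0]
    have : (16:ℤ)^(n+1) * f 0 = 16 * (16^n * f 0) := by ring
    rw [this, ← ih, ← comb]
    ring

lemma sum_odd (h : ℤ → ℤ) (hodd : ∀ m : ℤ, h (-m) = - h m) (n : ℕ) :
    ∑ j ∈ Finset.range (n + 1), (n.choose j : ℤ) * h ((n : ℤ) - 2 * j) = 0 := by
  have refl : ∑ j ∈ Finset.range (n + 1), (n.choose j : ℤ) * h ((n : ℤ) - 2 * j)
      = ∑ j ∈ Finset.range (n + 1), (n.choose (n - j) : ℤ) * h ((n : ℤ) - 2 * ((n - j : ℕ) : ℤ)) := by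
    exact (Finset.sum_range_reflect (fun j => (n.choose j : ℤ) * h ((n : ℤ) - 2 * j)) (n+1)).symm
  have step : ∀ j ∈ Finset.range (n + 1),
      (n.choose (n - j) : ℤ) * h ((n : ℤ) - 2 * ((n - j : ℕ) : ℤ)) =
      - ((n.choose j : ℤ) * h ((n : ℤ) - 2 * j)) := by
    intro j hj
    have hjn : j ≤ n := by simpa [Nat.lt_succ_iff] using hj
    rw [Nat.choose_symm hjn]
    have e : (n : ℤ) - 2 * ((n - j : ℕ) : ℤ) = -((n:ℤ) - 2*j) := by
        have : ((n - j : ℕ) : ℤ) = (n:ℤ) - j := by omega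
        rw [this]; ring
    rw [e, hodd]; ring
  rw [Finset.sum_congr rfl step, Finset.sum_neg_distrib] at refl
  linarith

-- partial sums of vseq
def Wn : ℕ → ℤ := fun m => ∑ r ∈ Finset.range (m + 1), vseq r


lemma Wn_zero : Wn 0 = 1 := by simp [Wn, vseq]
lemma Wn_one : Wn 1 = 15 := by simp [Wn, Finset.sum_range_succ, vseq]
lemma Wn_two : Wn 2 = 239 := by simp [Wn, Finset.sum_range_succ, vseq]

lemma Wn_succ (m : ℕ) : Wn (m + 1) = Wn m + vseq (m + 1) := Finset.sum_range_succ _ _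

lemma Qlem : ∀ m : ℕ, Wn (m + 2) - 16 * Wn (m + 1) + Wn m = 0 := by
  intro m
  induction m with
  | zero => rw [Wn_zero, Wn_one, Wn_two]; norm_num
  | succ m ih =>
    have h1 := Wn_succ (m + 2)
    have h2 := Wn_succ (m + 1)
    have h3 := Wn_succ m
    have h4 : vseq (m + 3) = 16 * vseq (m + 2) - vseq (m + 1) := by rw [vseq]
    have : m + 1 + 2 = m + 3 := by omega
    rw [this]
    have : m + 1 + 1 = m + 2 := by omega
    rw [this]
    linarith

lemma gA : ∀ m : ℕ, Wn (m + 1) + Wn m = 2 * Aseq (m + 1) := by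
  have base0 : Wn 1 + Wn 0 = 2 * Aseq 1 := by
    rw [Wn_zero, Wn_one]; show (15 : ℤ) + 1 = 2 * 8; norm_num
  have base1 : Wn 2 + Wn 1 = 2 * Aseq 2 := by
    rw [Wn_one, Wn_two]
    show (239 : ℤ) + 15 = 2 * (16 * Aseq 1 - Aseq 0)
    show (239 : ℤ) + 15 = 2 * (16 * 8 - 1); norm_num
  have key : ∀ m : ℕ, (Wn (m + 1) + Wn m = 2 * Aseq (m + 1)) ∧
      (Wn (m + 2) + Wn (m + 1) = 2 * Aseq (m + 2)) := by
    intro m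
    induction m with
    | zero => exact ⟨base0, base1⟩
    | succ m ih =>
      refine ⟨ih.2, ?_⟩
      have hq1 := Qlem m
      have hq2 := Qlem (m + 1)
      have hA : Aseq (m + 3) = 16 * Aseq (m + 2) - Aseq (m + 1) := by rw [Aseq]
      have e1 : m + 1 + 2 = m + 3 := by omega
      have e2 : m + 1 + 1 = m + 2 := by omega
      rw [e1, e2] at *
      have := ih.1
      have := ih.2
      linarith
  exact fun m => (key m).1

def gfun : ℤ → ℤ := fun m => if m < 0 then 0 else if m = 0 then 1 else 2 * Aseq m.natAbs

lemma gfun_odd_part (m : ℤ) : gfun (-m) - fA (-m) = -(gfun m - fA m) := by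
  rcases lt_trichotomy m 0 with h | h | h
  · have h1 : gfun m = 0 := by simp [gfun, h]
    have h2 : gfun (-m) = 2 * Aseq (-m).natAbs := by
      simp only [gfun]
      rw [if_neg (by omega), if_neg (by omega)]
    have h3 : fA (-m) = fA m := by simp [fA]
    rw [h1, h2, h3]
    simp only [fA]
    have : (-m).natAbs = m.natAbs := by omega
    rw [this]; ring
  · subst h; simp; rfl
  · have h1 : gfun (-m) = 0 := by simp [gfun]; omega
    have h2 : gfun m = 2 * Aseq m.natAbs := by
      simp only [gfun]
      rw [if_neg (by omega), if_neg (by omega)]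
    have h3 : fA (-m) = fA m := by simp [fA]
    rw [h1, h2, h3]
    simp only [fA]; ring

lemma gfun_sum (n : ℕ) :
    ∑ j ∈ Finset.range (n + 1), (n.choose j : ℤ) * gfun ((n : ℤ) - 2 * j) = 16 ^ n := by
  have hodd : ∀ m : ℤ, (fun m => gfun m - fA m) (-m) = - (fun m => gfun m - fA m) m := by
    intro m; exact gfun_odd_part m
  have h1 := sum_odd (fun m => gfun m - fA m) hodd n
  have h2 := sum_f fA fA_rel n
  have h3 : fA 0 = 1 := rfl
  rw [h3, mul_one] at h2
  have expand : ∀ j ∈ Finset.range (n + 1),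
      (n.choose j : ℤ) * gfun ((n : ℤ) - 2 * j)
      = (n.choose j : ℤ) * ((fun m => gfun m - fA m) ((n : ℤ) - 2 * j))
        + (n.choose j : ℤ) * fA ((n : ℤ) - 2 * j) := by
    intro j _; simp; ring
  rw [Finset.sum_congr rfl expand, Finset.sum_add_distrib, h1, h2, zero_add]


lemma icc_sum (n : ℕ) (K : ℤ) (hK : K ≤ n) :
    ∑ i ∈ Finset.Icc (0:ℤ) K, (n.choose i.toNat : ℤ)
    = ∑ j ∈ Finset.range (n+1), if (j:ℤ) ≤ K then (n.choose j : ℤ) else 0 := by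
  rw [Finset.sum_ite, Finset.sum_const_zero, add_zero]
  rcases lt_or_ge K 0 with h | h
  · rw [Finset.Icc_eq_empty (by omega)]
    rw [Finset.filter_false_of_mem (fun j _ => by omega), Finset.sum_empty, Finset.sum_empty]
  · refine Finset.sum_bij' (fun (i : ℤ) _ => i.toNat) (fun (j : ℕ) _ => (j : ℤ)) ?_ ?_ ?_ ?_ ?_
    · intro a ha
      simp only [Finset.mem_Icc] at ha
      simp only [Finset.mem_filter, Finset.mem_range]
      omega
    · intro a ha
      simp only [Finset.mem_filter, Finset.mem_range] at ha
      simp only [Finset.mem_Icc]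
      omega
    · intro a ha
      simp only [Finset.mem_Icc] at ha
      show ((a.toNat : ℕ) : ℤ) = a
      omega
    · intro a _
      show ((a : ℤ)).toNat = a
      omega
    · intro a _; rfl

lemma kfun_le (n r : ℕ) (hr : 1 ≤ r) : kfun n (-(r:ℤ)) ≤ n ∧ kfun n (r:ℤ) ≤ n := by
  have habs : |(-(r:ℤ))| = r := by rw [abs_neg]; exact abs_of_nonneg (by positivity)
  have habs2 : |((r:ℤ))| = r := abs_of_nonneg (by positivity)
  constructor <;> (simp only [kfun, habs, habs2]; split_ifs <;> omega)

lemma kfun_neg_iff (n r j : ℕ) (hr : 1 ≤ r) :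
    ((j:ℤ) ≤ kfun n (-(r:ℤ))) ↔ ((r:ℤ) ≤ (n:ℤ) - 2*j) := by
  have habs : |(-(r:ℤ))| = r := by rw [abs_neg]; exact abs_of_nonneg (by positivity)
  simp only [kfun, habs]
  split_ifs <;> omega

lemma kfun_pos_iff (n r j : ℕ) (hr : 1 ≤ r) :
    ((j:ℤ) ≤ kfun n ((r:ℤ))) ↔ ((r:ℤ) + 1 ≤ (n:ℤ) - 2*j) := by
  have habs2 : |((r:ℤ))| = r := abs_of_nonneg (by positivity)
  simp only [kfun, habs2]
  split_ifs <;> omega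

def efun (r : ℕ) (m : ℤ) : ℤ :=
  (if (r:ℤ) ≤ m then 1 else 0) + (if (r:ℤ) + 1 ≤ m then 1 else 0)

lemma Dfun_expand (n r : ℕ) (hr : 1 ≤ r) :
    Dfun n r = ∑ j ∈ Finset.range (n+1), (n.choose j : ℤ) * efun r ((n:ℤ) - 2*j) := by
  have h0 : r ≠ 0 := by omega
  rw [Dfun, if_neg h0]
  obtain ⟨hK1, hK2⟩ := kfun_le n r hr
  rw [icc_sum n _ hK2, icc_sum n _ hK1, ← Finset.sum_add_distrib]
  refine Finset.sum_congr rfl fun j hj => ?_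
  have e1 := kfun_pos_iff n r j hr
  have e2 := kfun_neg_iff n r j hr
  simp only [efun, mul_add, mul_ite, mul_one, mul_zero]
  rw [if_congr e1 rfl rfl, if_congr e2 rfl rfl]
  ring

lemma oddind_odd (m : ℤ) :
    ((if (0:ℤ) ≤ -m then (1:ℤ) else 0) + (if (0:ℤ)+1 ≤ -m then 1 else 0) - 1)
    = -((if (0:ℤ) ≤ m then (1:ℤ) else 0) + (if (0:ℤ)+1 ≤ m then 1 else 0) - 1) := by
  split_ifs <;> omega

lemma Dfun_expand0 (n : ℕ) :
    Dfun n 0 = ∑ j ∈ Finset.range (n+1), (n.choose j : ℤ) * efun 0 ((n:ℤ) - 2*j) := by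
  rw [Dfun, if_pos rfl]
  have hodd := sum_odd (fun m => (if (0:ℤ) ≤ m then (1:ℤ) else 0) + (if (0:ℤ)+1 ≤ m then 1 else 0) - 1)
    (fun m => oddind_odd m) n
  have hch : ∑ j ∈ Finset.range (n+1), (n.choose j : ℤ) = 2^n := by
    have := Nat.sum_range_choose n
    exact_mod_cast this
  have expand : ∀ j ∈ Finset.range (n+1),
      (n.choose j : ℤ) * efun 0 ((n:ℤ) - 2*j)
      = (n.choose j : ℤ) * ((fun m => (if (0:ℤ) ≤ m then (1:ℤ) else 0) + (if (0:ℤ)+1 ≤ m then 1 else 0) - 1) ((n:ℤ) - 2*j))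
        + (n.choose j : ℤ) := by
    intro j _
    simp only [efun, Nat.cast_zero]
    ring
  rw [Finset.sum_congr rfl expand, Finset.sum_add_distrib, hodd, hch, zero_add]


lemma Wsum (n : ℕ) (m : ℤ) (hm : m ≤ n) :
    ∑ r ∈ Finset.range (n+1), vseq r * (if (r:ℤ) ≤ m then (1:ℤ) else 0)
    = if m < 0 then 0 else Wn m.toNat := by
  rcases lt_or_ge m 0 with h | h
  · rw [if_pos h]
    apply Finset.sum_eq_zero
    intro r _
    rw [if_neg (by omega), mul_zero]
  · rw [if_neg (by omega)]
    have key : ∀ r ∈ Finset.range (n+1),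
        vseq r * (if (r:ℤ) ≤ m then (1:ℤ) else 0)
        = if r ∈ Finset.range (m.toNat + 1) then vseq r else 0 := by
      intro r _
      by_cases hc : (r:ℤ) ≤ m
      · rw [if_pos hc, if_pos (by simp only [Finset.mem_range]; omega), mul_one]
      · rw [if_neg hc, if_neg (by simp only [Finset.mem_range]; omega), mul_zero]
    rw [Finset.sum_congr rfl key, Finset.sum_ite_mem]
    have hint : Finset.range (n+1) ∩ Finset.range (m.toNat + 1) = Finset.range (m.toNat + 1) := by
      ext x
      simp only [Finset.mem_inter, Finset.mem_range]
      omega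
    rw [hint]
    rfl

lemma innerSum_vseq (n : ℕ) (m : ℤ) (hm : m ≤ n) :
    ∑ r ∈ Finset.range (n+1), vseq r * efun r m = gfun m := by
  have expand : ∀ r ∈ Finset.range (n+1),
      vseq r * efun r m = vseq r * (if (r:ℤ) ≤ m then (1:ℤ) else 0)
        + vseq r * (if (r:ℤ) ≤ m - 1 then (1:ℤ) else 0) := by
    intro r _
    rw [efun, mul_add]
    congr 2
    exact if_congr (by omega) rfl rfl
  rw [Finset.sum_congr rfl expand, Finset.sum_add_distrib,
      Wsum n m hm, Wsum n (m-1) (by omega)]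
  rcases lt_trichotomy m 0 with h | h | h
  · rw [if_pos h, if_pos (by omega)]
    simp [gfun, h]
  · subst h
    norm_num
    rw [Wn_zero]
    rfl
  · rw [if_neg (by omega), if_neg (by omega)]
    have hg : gfun m = 2 * Aseq m.natAbs := by
      simp only [gfun]
      rw [if_neg (by omega), if_neg (by omega)]
    rw [hg]
    obtain ⟨k, hk⟩ : ∃ k : ℕ, m = (k:ℤ) + 1 := ⟨(m-1).toNat, by omega⟩
    have e1 : m.toNat = k + 1 := by omega
    have e2 : (m-1).toNat = k := by omega
    have e3 : m.natAbs = k + 1 := by omega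
    rw [e1, e2, e3]
    exact gA k

lemma main_identity (n : ℕ) :
    ∑ r ∈ Finset.range (n + 1), vseq r * Dfun n r = 16 ^ n := by
  have expand : ∀ r ∈ Finset.range (n+1),
      vseq r * Dfun n r
      = ∑ j ∈ Finset.range (n+1), (n.choose j : ℤ) * (vseq r * efun r ((n:ℤ) - 2*j)) := by
    intro r _
    rcases Nat.eq_zero_or_pos r with h | h
    · subst h
      rw [Dfun_expand0 n, Finset.mul_sum]
      exact Finset.sum_congr rfl fun j _ => by ring
    · rw [Dfun_expand n r h, Finset.mul_sum]
      exact Finset.sum_congr rfl fun j _ => by ring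
  rw [Finset.sum_congr rfl expand, Finset.sum_comm]
  have hinner : ∀ j ∈ Finset.range (n+1),
      ∑ r ∈ Finset.range (n+1), (n.choose j : ℤ) * (vseq r * efun r ((n:ℤ) - 2*j))
      = (n.choose j : ℤ) * gfun ((n:ℤ) - 2*j) := by
    intro j _
    rw [← Finset.mul_sum, innerSum_vseq n _ (by omega)]
  rw [Finset.sum_congr rfl hinner, gfun_sum]

lemma Dfun_diag (n : ℕ) : Dfun n n = 1 := by
  rcases Nat.eq_zero_or_pos n with h | h
  · subst h; rfl
  · rw [Dfun, if_neg (by omega)]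
    have hk1 : kfun n ((n:ℤ)) = -1 := by
      rw [kfun, if_neg (by omega), if_pos (by omega), if_neg (by omega)]
      omega
    have hk2 : kfun n (-(n:ℤ)) = 0 := by
      rw [kfun, if_neg (by omega), if_pos (by omega), if_pos (by omega)]
      omega
    rw [hk1, hk2]
    rw [Finset.Icc_eq_empty (by omega), Finset.sum_empty, Finset.Icc_self, Finset.sum_singleton]
    simp

/-- If `w : ℕ → ℤ` satisfies `Σ_{r=0}^{n} w(r)·D(n,r) = 16^n` for all `n`, then
`w = v`. -/
theorem vseq_unique (w : ℕ → ℤ)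
    (hw : ∀ n : ℕ, ∑ r ∈ Finset.range (n + 1), w r * Dfun n r = 16 ^ n) :
    ∀ r : ℕ, w r = vseq r := by
  intro r
  induction r using Nat.strong_induction_on with
  | _ n ih =>
    have h1 := hw n
    have h2 := main_identity n
    have h3 : ∑ r ∈ Finset.range (n + 1), w r * Dfun n r
        = ∑ r ∈ Finset.range (n + 1), vseq r * Dfun n r := by rw [h1, h2]
    have h4 : ∑ r ∈ Finset.range n, w r * Dfun n r
        = ∑ r ∈ Finset.range n, vseq r * Dfun n r := by
      apply Finset.sum_congr rfl
      intro r hr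
      rw [ih r (Finset.mem_range.mp hr)]
    rw [Finset.sum_range_succ, Finset.sum_range_succ, h4, Dfun_diag] at h3
    linarith
end

section
/- For all δ, δ_L, δ_R, κ_L, κ_R, κ ∈ K there exist a, b, c, d, x, y, z, w ∈ Kˣ such that: δ = (a+a⁻¹)(b+b⁻¹)(c+c⁻¹)(d+d⁻¹); δ_L = (x+x⁻¹)(y+y⁻¹); δ_R = (z+z⁻¹)(w+w⁻¹); κ_L = (ab·x⁻¹ + x·(ab)⁻¹)·(cd·y⁻¹ + y·(cd)⁻¹); κ_R = (ad·w⁻¹ + w·(ad)⁻¹)·(bc·z⁻¹ + z·(bc)⁻¹); and κ = xy·(zw)⁻¹ + 2 + zw·(xy)⁻¹ if n is odd, while κ = abcd·(xyzw)⁻¹ + 2 + xyzw·(abcd)⁻¹ if n is even. -/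
open Polynomial

section Aux

variable {K : Type*} [Field K] [IsAlgClosed K]

/-- The basic map `u ↦ u + u⁻¹` on units. -/
noncomputable def hK {K : Type*} [Field K] (u : Kˣ) : K := (u : K) + ((u⁻¹ : Kˣ) : K)

lemma hK_div {K : Type*} [Field K] (u v : Kˣ) :
    hK (u * v⁻¹) = (u : K) * ((v⁻¹ : Kˣ) : K) + (v : K) * ((u⁻¹ : Kˣ) : K) := by
  simp only [hK, Units.val_mul, Units.val_inv_eq_inv_val, mul_inv, inv_inv]
  ring

lemma lemH (t : K) : ∃ u : Kˣ, hK u = t := by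
  obtain ⟨U, hU⟩ := IsAlgClosed.exists_root (X ^ 2 - C t * X + 1 : K[X]) (by
    intro h
    have : (X ^ 2 - C t * X + 1 : K[X]).degree = 2 := by compute_degree!
    simp [h] at this)
  rw [IsRoot.def] at hU
  simp only [eval_add, eval_sub, eval_pow, eval_mul, eval_C, eval_X, eval_one] at hU
  have hU0 : U ≠ 0 := by rintro rfl; simp at hU
  refine ⟨Units.mk0 U hU0, ?_⟩
  simp only [hK, Units.val_inv_eq_inv_val, Units.val_mk0]
  field_simp
  linear_combination hU

lemma lemA (t : K) (c : Kˣ) : ∃ u v : Kˣ, u * v = c ∧ hK u * hK v = t := by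
  set cv : K := (c : K) with hcv
  have hc0 : cv ≠ 0 := c.ne_zero
  obtain ⟨U, hU⟩ := IsAlgClosed.exists_root
      ((X ^ 2 + 1) * (X ^ 2 + C cv ^ 2) - C t * C cv * X ^ 2 : K[X]) (by
    intro h
    have : ((X ^ 2 + 1) * (X ^ 2 + C cv ^ 2) - C t * C cv * X ^ 2 : K[X]).degree = 4 := by
      compute_degree!
    simp [h] at this)
  rw [IsRoot.def] at hU
  simp only [eval_sub, eval_add, eval_mul, eval_pow, eval_C, eval_X, eval_one] at hU
  have hU0 : U ≠ 0 := by rintro rfl; simp [pow_eq_zero_iff] at hU; exact hc0 hU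
  refine ⟨Units.mk0 U hU0, c * (Units.mk0 U hU0)⁻¹, by rw [mul_comm, inv_mul_cancel_right], ?_⟩
  simp only [hK, Units.val_inv_eq_inv_val, Units.val_mk0, Units.val_mul, mul_inv, inv_inv]
  rw [← hcv]
  field_simp
  linear_combination hU

lemma lemB (t : K) (u m v : Kˣ) :
    ∃ a : Kˣ, hK a * hK (u * a⁻¹) * hK (m * a * u⁻¹) * hK (u * v * (m * a)⁻¹) = t := by
  set uv : K := (u : K) with huv
  set mv : K := (m : K) with hmv
  set vv : K := (v : K) with hvv
  have hu0 : uv ≠ 0 := u.ne_zero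
  have hm0 : mv ≠ 0 := m.ne_zero
  have hv0 : vv ≠ 0 := v.ne_zero
  obtain ⟨A, hA⟩ := IsAlgClosed.exists_root
      ((X ^ 2 + 1) * (X ^ 2 + C uv ^ 2) * (C mv ^ 2 * X ^ 2 + C uv ^ 2) *
        (C mv ^ 2 * X ^ 2 + C uv ^ 2 * C vv ^ 2)
        - C t * C uv ^ 3 * C vv * C mv ^ 2 * X ^ 4 : K[X]) (by
    intro h
    have : ((X ^ 2 + 1) * (X ^ 2 + C uv ^ 2) * (C mv ^ 2 * X ^ 2 + C uv ^ 2) *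
        (C mv ^ 2 * X ^ 2 + C uv ^ 2 * C vv ^ 2)
        - C t * C uv ^ 3 * C vv * C mv ^ 2 * X ^ 4 : K[X]).degree = 8 := by
      compute_degree!
    simp [h] at this)
  rw [IsRoot.def] at hA
  simp only [eval_sub, eval_add, eval_mul, eval_pow, eval_C, eval_X, eval_one] at hA
  have hA0 : A ≠ 0 := by
    rintro rfl
    simp only [ne_eq, OfNat.ofNat_ne_zero, not_false_eq_true, zero_pow, zero_add, add_zero,
      mul_zero, zero_mul, one_mul, sub_zero, mul_eq_zero, pow_eq_zero_iff] at hA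
    tauto
  refine ⟨Units.mk0 A hA0, ?_⟩
  simp only [hK, Units.val_inv_eq_inv_val, Units.val_mk0, Units.val_mul, mul_inv, inv_inv]
  rw [← huv, ← hmv, ← hvv]
  field_simp
  linear_combination hA

/-- Main auxiliary construction. -/
lemma main_aux (δ δL δR κL κR : K) (c₂ c₃ : Kˣ) :
    ∃ a b c d x y z w : Kˣ,
      δ = hK a * hK b * hK c * hK d ∧
      δL = hK x * hK y ∧
      δR = hK z * hK w ∧
      κL = hK (a * b * x⁻¹) * hK (c * d * y⁻¹) ∧
      κR = hK (a * d * w⁻¹) * hK (b * c * z⁻¹) ∧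
      x * y * (z * w)⁻¹ = c₂ ∧
      (a * b * c * d) * (x * y * z * w)⁻¹ = c₂ * c₃⁻¹ := by
  obtain ⟨p, q, hpq, hpqh⟩ := lemA κL 1
  obtain ⟨r, s, hrs, hrsh⟩ := lemA κR c₂
  obtain ⟨x, y, hxy, hxyh⟩ := lemA δL c₃
  obtain ⟨z, w, hzw, hzwh⟩ := lemA δR (c₃ * c₂⁻¹)
  obtain ⟨a, ha⟩ := lemB δ (p * x) (s * z) (q * y)
  have hr : c₂ * s⁻¹ = r := by rw [← hrs, mul_inv_cancel_right]
  have hw : z⁻¹ * (c₃ * c₂⁻¹) = w := by rw [← hzw, inv_mul_cancel_left]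
  refine ⟨a, (p * x) * a⁻¹, (s * z) * a * (p * x)⁻¹, (p * x) * (q * y) * ((s * z) * a)⁻¹,
    x, y, z, w, ha.symm, hxyh.symm, hzwh.symm, ?_, ?_, ?_, ?_⟩
  · have h1 : a * ((p * x) * a⁻¹) * x⁻¹ = p := by
      refine Units.ext ?_
      simp only [Units.val_mul, Units.val_inv_eq_inv_val]
      field_simp
    have h2 : ((s * z) * a * (p * x)⁻¹) * ((p * x) * (q * y) * ((s * z) * a)⁻¹) * y⁻¹ = q := by
      refine Units.ext ?_
      simp only [Units.val_mul, Units.val_inv_eq_inv_val, mul_inv]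
      field_simp
    rw [h1, h2]; exact hpqh.symm
  · have h1 : a * ((p * x) * (q * y) * ((s * z) * a)⁻¹) * w⁻¹ = r := by
      rw [← hr, ← hw]
      have h0 : a * ((p * x) * (q * y) * ((s * z) * a)⁻¹) = (p * q) * (x * y) * (s * z)⁻¹ := by
        refine Units.ext ?_
        simp only [Units.val_mul, Units.val_inv_eq_inv_val, mul_inv]
        field_simp
      rw [h0, hpq, hxy]
      refine Units.ext ?_
      simp only [Units.val_mul, Units.val_inv_eq_inv_val, mul_inv, inv_inv, Units.val_one]
      field_simp
    have h2 : ((p * x) * a⁻¹) * ((s * z) * a * (p * x)⁻¹) * z⁻¹ = s := by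
      refine Units.ext ?_
      simp only [Units.val_mul, Units.val_inv_eq_inv_val, mul_inv]
      field_simp
    rw [h1, h2]; exact hrsh.symm
  · rw [hzw, hxy]
    refine Units.ext ?_
    simp only [Units.val_mul, Units.val_inv_eq_inv_val, mul_inv, inv_inv]
    field_simp
  · have h0 : a * ((p * x) * a⁻¹) * ((s * z) * a * (p * x)⁻¹) *
        ((p * x) * (q * y) * ((s * z) * a)⁻¹) = (p * q) * (x * y) := by
      refine Units.ext ?_
      simp only [Units.val_mul, Units.val_inv_eq_inv_val, mul_inv]
      field_simp
    have h1 : x * y * z * w = (x * y) * (z * w) := by rw [mul_assoc]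
    rw [h0, h1, hpq, hxy, hzw]
    refine Units.ext ?_
    simp only [Units.val_mul, Units.val_inv_eq_inv_val, mul_inv, inv_inv, Units.val_one]
    field_simp

end Aux

/-- Over an algebraically closed field `K`, for any prescribed parameters
`δ, δ_L, δ_R, κ_L, κ_R, κ ∈ K` there exist units `a, b, c, d, x, y, z, w ∈ Kˣ`
satisfying the six parameter equations of Theorem `thm:rep`. -/
theorem exists_units_satisfying_parameter_equations
    (K : Type*) [Field K] [IsAlgClosed K] (n : ℕ)
    (δ δL δR κL κR κ : K) :
    ∃ a b c d x y z w : Kˣ,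
      δ = ((a : K) + (a⁻¹ : Kˣ)) * ((b : K) + (b⁻¹ : Kˣ)) *
          ((c : K) + (c⁻¹ : Kˣ)) * ((d : K) + (d⁻¹ : Kˣ)) ∧
      δL = ((x : K) + (x⁻¹ : Kˣ)) * ((y : K) + (y⁻¹ : Kˣ)) ∧
      δR = ((z : K) + (z⁻¹ : Kˣ)) * ((w : K) + (w⁻¹ : Kˣ)) ∧
      κL = (((a * b : Kˣ) : K) * ((x⁻¹ : Kˣ) : K) + (x : K) * (((a * b)⁻¹ : Kˣ) : K)) *
           (((c * d : Kˣ) : K) * ((y⁻¹ : Kˣ) : K) + (y : K) * (((c * d)⁻¹ : Kˣ) : K)) ∧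
      κR = (((a * d : Kˣ) : K) * ((w⁻¹ : Kˣ) : K) + (w : K) * (((a * d)⁻¹ : Kˣ) : K)) *
           (((b * c : Kˣ) : K) * ((z⁻¹ : Kˣ) : K) + (z : K) * (((b * c)⁻¹ : Kˣ) : K)) ∧
      (Odd n →
        κ = ((x * y : Kˣ) : K) * (((z * w)⁻¹ : Kˣ) : K) + 2 +
            ((z * w : Kˣ) : K) * (((x * y)⁻¹ : Kˣ) : K)) ∧
      (Even n →
        κ = ((a * b * c * d : Kˣ) : K) * (((x * y * z * w)⁻¹ : Kˣ) : K) + 2 +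
            ((x * y * z * w : Kˣ) : K) * (((a * b * c * d)⁻¹ : Kˣ) : K)) := by
  obtain ⟨ν, hν⟩ := lemH (K := K) (κ - 2)
  rcases Nat.even_or_odd n with hn | hn
  · -- even case
    obtain ⟨a, b, c, d, x, y, z, w, h1, h2, h3, h4, h5, h6, h7⟩ :=
      main_aux δ δL δR κL κR (1 : Kˣ) ν⁻¹
    refine ⟨a, b, c, d, x, y, z, w, h1, h2, h3, ?_, ?_, ?_, ?_⟩
    · rw [h4, hK_div (a * b) x, hK_div (c * d) y]
    · rw [h5, hK_div (a * d) w, hK_div (b * c) z]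
    · intro hodd; exact absurd hodd (Nat.not_odd_iff_even.mpr hn)
    · intro _
      have h8 : (a * b * c * d) * (x * y * z * w)⁻¹ = ν := by rw [h7]; simp
      have h9 := hK_div (a * b * c * d) (x * y * z * w)
      rw [h8, hν] at h9
      linear_combination h9
  · -- odd case
    obtain ⟨a, b, c, d, x, y, z, w, h1, h2, h3, h4, h5, h6, h7⟩ :=
      main_aux δ δL δR κL κR ν (1 : Kˣ)
    refine ⟨a, b, c, d, x, y, z, w, h1, h2, h3, ?_, ?_, ?_, ?_⟩
    · rw [h4, hK_div (a * b) x, hK_div (c * d) y]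
    · rw [h5, hK_div (a * d) w, hK_div (b * c) z]
    · intro _
      have h9 := hK_div (x * y) (z * w)
      rw [h6, hν] at h9
      linear_combination h9
    · intro heven; exact absurd heven (Nat.not_even_iff_odd.mpr hn)
end

section
/- Suppose n ≥ 3. Then for all a, b, c, d ∈ Kˣ and all 1 ≤ i ≤ n−2: ℛ(U_i) ∘ ℛ(U_{i+1}) ∘ ℛ(U_i) = ℛ(U_i) and ℛ(U_{i+1}) ∘ ℛ(U_i) ∘ ℛ(U_{i+1}) = ℛ(U_{i+1}). -/
/-- The index set `I_n = {−2n+1, …, 2n}`, as a subtype of `ℤ`. -/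
abbrev Pos (n : ℕ) : Type := ↥(Set.Icc (-2 * (n : ℤ) + 1) (2 * (n : ℤ)))

/-- Basis labels for `V(n)`: functions `α : I_n → {1, 2}`, where the value
`(0 : Fin 2)` encodes the letter `1` and `(1 : Fin 2)` encodes the letter `2`. -/
abbrev Idx (n : ℕ) : Type := Pos n → Fin 2

/-- `V(n)`, the `K`-vector space with basis indexed by `Idx n`. -/
abbrev Vn (K : Type*) [Field K] (n : ℕ) : Type _ := Idx n →₀ K

/-- The cyclic successor on `I_n`: `i ↦ i + 1`, except `2n ↦ −2n+1`. -/
def nxt {n : ℕ} (i : Pos n) : Pos n :=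
  if h : (i : ℤ) = 2 * (n : ℤ) then
    ⟨-2 * (n : ℤ) + 1, le_refl _, le_trans i.2.1 i.2.2⟩
  else
    ⟨(i : ℤ) + 1, by have h1 := i.2.1; have h2 := i.2.2; constructor <;> omega⟩

/-- The letter (`1` or `2`) encoded by an element of `Fin 2`. -/
def lv (t : Fin 2) : ℤ := (t : ℤ) + 1

/-- The action of `R^q_i` on the basis vector `e_α`: it is `0` if
`α(i) = α(i')` (where `i' = nxt i`), and otherwise equals
`q^{2−α(i)}·e_β + q^{1−α(i)}·e_γ` where `β = α[i ↦ 1, i' ↦ 2]` and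
`γ = α[i ↦ 2, i' ↦ 1]` (letters encoded in `Fin 2` as `0`, `1`). -/
noncomputable def Rbasis {K : Type*} [Field K] (n : ℕ) (q : Kˣ) (i : Pos n)
    (α : Idx n) : Vn K n :=
  if α i = α (nxt i) then 0
  else ((q ^ (2 - lv (α i)) : Kˣ) : K) •
         Finsupp.single (Function.update (Function.update α i 0) (nxt i) 1) (1 : K) +
       ((q ^ (1 - lv (α i)) : Kˣ) : K) •
         Finsupp.single (Function.update (Function.update α i 1) (nxt i) 0) (1 : K)

/-- The operator `R^q_i` as a linear endomorphism of `V(n)`. -/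
noncomputable def Rop {K : Type*} [Field K] (n : ℕ) (q : Kˣ) (i : Pos n) :
    Vn K n →ₗ[K] Vn K n :=
  Finsupp.linearCombination K (Rbasis n q i)

/-- `R^q_j` for `j : ℤ`; it is the zero map when `j ∉ I_n`. -/
noncomputable def RopZ {K : Type*} [Field K] (n : ℕ) (q : Kˣ) (j : ℤ) :
    Vn K n →ₗ[K] Vn K n :=
  if h : -2 * (n : ℤ) + 1 ≤ j ∧ j ≤ 2 * (n : ℤ) then Rop n q ⟨j, h⟩ else 0

/-- `ℛ(U_i) = R^a_{−n−i} ∘ R^b_{−n+i} ∘ R^c_{n−i} ∘ R^d_{n+i}`. -/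
noncomputable def RU {K : Type*} [Field K] (n : ℕ) (a b c d : Kˣ) (i : ℤ) :
    Vn K n →ₗ[K] Vn K n :=
  RopZ n a (-(n : ℤ) - i) ∘ₗ RopZ n b (-(n : ℤ) + i) ∘ₗ
    RopZ n c ((n : ℤ) - i) ∘ₗ RopZ n d ((n : ℤ) + i)

/-- `ℛ(e) = R^x_{−n} ∘ R^y_{n}`. -/
noncomputable def Re {K : Type*} [Field K] (n : ℕ) (x y : Kˣ) :
    Vn K n →ₗ[K] Vn K n :=
  RopZ n x (-(n : ℤ)) ∘ₗ RopZ n y (n : ℤ)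

/-- `ℛ(f) = R^z_0 ∘ R^w_{2n}`. -/
noncomputable def Rf {K : Type*} [Field K] (n : ℕ) (z w : Kˣ) :
    Vn K n →ₗ[K] Vn K n :=
  RopZ n z 0 ∘ₗ RopZ n w (2 * (n : ℤ))


section Helpers
variable {K : Type*} [Field K] {n : ℕ}

lemma fin2 (t : Fin 2) : t = 0 ∨ t = 1 := by omega

lemma posne {x y : Pos n} (h : (x : ℤ) ≠ (y : ℤ)) : x ≠ y :=
  fun e => h (by rw [e])

lemma Rop_single (q : Kˣ) (i : Pos n) (α : Idx n) :
    Rop n q i (Finsupp.single α (1:K)) = Rbasis n q i α := by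
  simp [Rop, Finsupp.linearCombination_single]

lemma Rop_single' (q : Kˣ) (i : Pos n) (α : Idx n) (c : K) :
    Rop n q i (Finsupp.single α c) = c • Rbasis n q i α := by
  simp [Rop, Finsupp.linearCombination_single]

lemma lin_ext {f g : Vn K n →ₗ[K] Vn K n}
    (h : ∀ α : Idx n, f (Finsupp.single α (1:K)) = g (Finsupp.single α 1)) : f = g := by
  apply Finsupp.lhom_ext; intro α b
  have hb : (Finsupp.single α b : Vn K n) = b • Finsupp.single α 1 := by simp
  rw [hb, map_smul, map_smul, h]

lemma update_self_of {γ : Type*} [DecidableEq γ] {f : γ → Fin 2} (a : γ) (v : Fin 2)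
    (h : f a = v) : Function.update f a v = f := by rw [← h, Function.update_eq_self]

lemma TL1 (q : Kˣ) (i0 i1 i2 : Pos n) (h1 : nxt i0 = i1) (h2 : nxt i1 = i2)
    (h01 : i0 ≠ i1) (h02 : i0 ≠ i2) (h12 : i1 ≠ i2) :
    Rop n q i0 ∘ₗ (Rop n q i1 ∘ₗ Rop n q i0) = Rop n q i0 := by
  apply lin_ext; intro α
  simp only [LinearMap.comp_apply, Rop_single]
  rcases fin2 (α i0) with hx|hx <;> rcases fin2 (α i1) with hy|hy <;>
    rcases fin2 (α i2) with hz|hz <;>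
    simp [Rbasis, h1, h2, hx, hy, hz, lv, h01, h02, h12, h01.symm, h02.symm, h12.symm,
      Rop_single', Function.update_apply, Function.update_idem,
      Function.update_comm h01, Function.update_comm h02, Function.update_comm h12,
      update_self_of,
      smul_add, smul_smul, map_add, map_smul]

lemma TL2 (q : Kˣ) (i0 i1 i2 : Pos n) (h1 : nxt i0 = i1) (h2 : nxt i1 = i2)
    (h01 : i0 ≠ i1) (h02 : i0 ≠ i2) (h12 : i1 ≠ i2) :
    Rop n q i1 ∘ₗ (Rop n q i0 ∘ₗ Rop n q i1) = Rop n q i1 := by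
  apply lin_ext; intro α
  simp only [LinearMap.comp_apply, Rop_single]
  rcases fin2 (α i0) with hx|hx <;> rcases fin2 (α i1) with hy|hy <;>
    rcases fin2 (α i2) with hz|hz <;>
    simp [Rbasis, h1, h2, hx, hy, hz, lv, h01, h02, h12, h01.symm, h02.symm, h12.symm,
      Rop_single', Function.update_apply, Function.update_idem,
      Function.update_comm h01, Function.update_comm h02, Function.update_comm h12,
      update_self_of,
      smul_add, smul_smul, map_add, map_smul]

set_option linter.unnecessarySeqFocus false in
lemma Rcomm (q p : Kˣ) (i j : Pos n) (hii : i ≠ nxt i) (hjj : j ≠ nxt j)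
    (h1 : i ≠ j) (h2 : i ≠ nxt j) (h3 : nxt i ≠ j) (h4 : nxt i ≠ nxt j) :
    Rop n q i ∘ₗ Rop n p j = Rop n p j ∘ₗ Rop n q i := by
  apply lin_ext; intro α
  simp only [LinearMap.comp_apply, Rop_single]
  by_cases hc : α i = α (nxt i) <;> by_cases hd : α j = α (nxt j) <;>
    simp [Rbasis, hc, hd, lv, h1, h2, h3, h4, h1.symm, h2.symm, h3.symm, h4.symm,
      Rop_single', Function.update_apply, Function.update_idem,
      Function.update_comm hii, Function.update_comm hjj, Function.update_comm h1,
      Function.update_comm h2, Function.update_comm h3, Function.update_comm h4,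
      smul_add, smul_smul, map_add, map_smul, -Finsupp.single_mul] <;>
    (try (simp only [mul_comm]; abel))

lemma RopZ_eq (q : Kˣ) (j : ℤ) (h : -2 * (n:ℤ) + 1 ≤ j ∧ j ≤ 2 * (n:ℤ)) :
    RopZ (K := K) n q j = Rop n q ⟨j, h⟩ := dif_pos h

lemma nxt_mk (j : ℤ) (h : -2 * (n:ℤ) + 1 ≤ j ∧ j ≤ 2 * (n:ℤ)) (hne : j ≠ 2 * (n:ℤ))
    (h' : -2 * (n:ℤ) + 1 ≤ j + 1 ∧ j + 1 ≤ 2 * (n:ℤ)) :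
    nxt (⟨j, h⟩ : Pos n) = ⟨j + 1, h'⟩ := by
  simp only [nxt, hne, dif_neg, not_false_iff]

lemma RopZ_TL (q : Kˣ) (j k : ℤ) (hk : k = j + 1)
    (h1 : -2 * (n:ℤ) + 1 ≤ j) (h2 : j + 2 ≤ 2 * (n:ℤ)) :
    (RopZ (K := K) n q j ∘ₗ (RopZ n q k ∘ₗ RopZ n q j) = RopZ n q j) ∧
    (RopZ (K := K) n q k ∘ₗ (RopZ n q j ∘ₗ RopZ n q k) = RopZ n q k) := by
  subst hk
  have hb0 : -2 * (n:ℤ) + 1 ≤ j ∧ j ≤ 2 * (n:ℤ) := by omega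
  have hb1 : -2 * (n:ℤ) + 1 ≤ j + 1 ∧ j + 1 ≤ 2 * (n:ℤ) := by omega
  have hb2 : -2 * (n:ℤ) + 1 ≤ j + 1 + 1 ∧ j + 1 + 1 ≤ 2 * (n:ℤ) := by omega
  rw [RopZ_eq q j hb0, RopZ_eq q (j+1) hb1]
  have e1 : nxt (⟨j, hb0⟩ : Pos n) = ⟨j+1, hb1⟩ := nxt_mk j hb0 (by omega) hb1
  have e2 : nxt (⟨j+1, hb1⟩ : Pos n) = ⟨j+1+1, hb2⟩ := nxt_mk (j+1) hb1 (by omega) hb2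
  refine ⟨TL1 q _ _ _ e1 e2 ?_ ?_ ?_, TL2 q _ _ _ e1 e2 ?_ ?_ ?_⟩ <;>
    exact posne (by simp; try omega)

lemma RopZ_comm (q p : Kˣ) (j k : ℤ)
    (hj1 : -2 * (n:ℤ) + 1 ≤ j) (hj2 : j + 1 ≤ 2 * (n:ℤ))
    (hk1 : -2 * (n:ℤ) + 1 ≤ k) (hk2 : k + 1 ≤ 2 * (n:ℤ))
    (hjk : j + 2 ≤ k ∨ k + 2 ≤ j) :
    Commute (RopZ (K := K) n q j) (RopZ n p k) := by
  have hbj : -2 * (n:ℤ) + 1 ≤ j ∧ j ≤ 2 * (n:ℤ) := by omega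
  have hbj' : -2 * (n:ℤ) + 1 ≤ j + 1 ∧ j + 1 ≤ 2 * (n:ℤ) := by omega
  have hbk : -2 * (n:ℤ) + 1 ≤ k ∧ k ≤ 2 * (n:ℤ) := by omega
  have hbk' : -2 * (n:ℤ) + 1 ≤ k + 1 ∧ k + 1 ≤ 2 * (n:ℤ) := by omega
  show _ * _ = _ * _
  rw [Module.End.mul_eq_comp, Module.End.mul_eq_comp, RopZ_eq q j hbj, RopZ_eq p k hbk]
  have e1 : nxt (⟨j, hbj⟩ : Pos n) = ⟨j+1, hbj'⟩ := nxt_mk j hbj (by omega) hbj'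
  have e2 : nxt (⟨k, hbk⟩ : Pos n) = ⟨k+1, hbk'⟩ := nxt_mk k hbk (by omega) hbk'
  apply Rcomm <;> (try simp only [e1, e2]) <;> exact posne (by simp; try omega)

end Helpers

set_option linter.unusedVariables false in

lemma assemble {M : Type*} [Monoid M] (a1 a2 b1 b2 c1 c2 d1 d2 : M)
    (hA : a1*(a2*a1) = a1) (hB : b1*(b2*b1) = b1)
    (hC : c1*(c2*c1) = c1) (hD : d1*(d2*d1) = d1)
    (hab11 : Commute a1 b1) (hab12 : Commute a1 b2)
    (hab21 : Commute a2 b1) (hab22 : Commute a2 b2)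
    (hac11 : Commute a1 c1) (hac12 : Commute a1 c2)
    (hac21 : Commute a2 c1) (hac22 : Commute a2 c2)
    (had11 : Commute a1 d1) (had12 : Commute a1 d2)
    (had21 : Commute a2 d1) (had22 : Commute a2 d2)
    (hbc11 : Commute b1 c1) (hbc12 : Commute b1 c2)
    (hbc21 : Commute b2 c1) (hbc22 : Commute b2 c2)
    (hbd11 : Commute b1 d1) (hbd12 : Commute b1 d2)
    (hbd21 : Commute b2 d1) (hbd22 : Commute b2 d2)
    (hcd11 : Commute c1 d1) (hcd12 : Commute c1 d2)
    (hcd21 : Commute c2 d1) (hcd22 : Commute c2 d2) :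
    a1*(b1*(c1*d1)) * (a2*(b2*(c2*d2)) * (a1*(b1*(c1*d1)))) = a1*(b1*(c1*d1)) := by
  have hA' : ∀ z, a1*(a2*(a1*z)) = a1*z := fun z => by
    rw [← mul_assoc, ← mul_assoc, mul_assoc a1 a2 a1, hA]
  have hB' : ∀ z, b1*(b2*(b1*z)) = b1*z := fun z => by
    rw [← mul_assoc, ← mul_assoc, mul_assoc b1 b2 b1, hB]
  have hC' : ∀ z, c1*(c2*(c1*z)) = c1*z := fun z => by
    rw [← mul_assoc, ← mul_assoc, mul_assoc c1 c2 c1, hC]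
  simp only [mul_assoc]
  simp only [hab11.symm.left_comm, hab12.symm.left_comm, hab21.symm.left_comm,
    hab22.symm.left_comm, hac11.symm.left_comm, hac12.symm.left_comm,
    hac21.symm.left_comm, hac22.symm.left_comm, had11.symm.left_comm,
    had12.symm.left_comm, had21.symm.left_comm, had22.symm.left_comm,
    hbc11.symm.left_comm, hbc12.symm.left_comm, hbc21.symm.left_comm,
    hbc22.symm.left_comm, hbd11.symm.left_comm, hbd12.symm.left_comm,
    hbd21.symm.left_comm, hbd22.symm.left_comm, hcd11.symm.left_comm,
    hcd12.symm.left_comm, hcd21.symm.left_comm, hcd22.symm.left_comm,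
    hab11.symm.eq, hab12.symm.eq, hab21.symm.eq, hab22.symm.eq,
    hac11.symm.eq, hac12.symm.eq, hac21.symm.eq, hac22.symm.eq,
    had11.symm.eq, had12.symm.eq, had21.symm.eq, had22.symm.eq,
    hbc11.symm.eq, hbc12.symm.eq, hbc21.symm.eq, hbc22.symm.eq,
    hbd11.symm.eq, hbd12.symm.eq, hbd21.symm.eq, hbd22.symm.eq,
    hcd11.symm.eq, hcd12.symm.eq, hcd21.symm.eq, hcd22.symm.eq]
  rw [hA', hB', hC', hD]



/-- For `n ≥ 3` and `1 ≤ i ≤ n−2`, the braid-type relations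
`ℛ(U_i)∘ℛ(U_{i+1})∘ℛ(U_i) = ℛ(U_i)` and `ℛ(U_{i+1})∘ℛ(U_i)∘ℛ(U_{i+1}) = ℛ(U_{i+1})`
hold. -/
theorem RU_braid {K : Type*} [Field K] (n : ℕ) (hn : 3 ≤ n)
    (a b c d : Kˣ) (i : ℤ) (hi1 : 1 ≤ i) (hi2 : i ≤ (n : ℤ) - 2) :
    RU (K := K) n a b c d i ∘ₗ RU n a b c d (i + 1) ∘ₗ RU n a b c d i =
      RU n a b c d i ∧
    RU (K := K) n a b c d (i + 1) ∘ₗ RU n a b c d i ∘ₗ RU n a b c d (i + 1) =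
      RU n a b c d (i + 1) := by
  have com : ∀ (q p : Kˣ) (u v : ℤ), -2*(n:ℤ)+1 ≤ u → u+1 ≤ 2*(n:ℤ) →
      -2*(n:ℤ)+1 ≤ v → v+1 ≤ 2*(n:ℤ) → (u+2 ≤ v ∨ v+2 ≤ u) →
      Commute (RopZ (K := K) n q u) (RopZ n p v) :=
    fun q p u v h1 h2 h3 h4 h5 => RopZ_comm q p u v h1 h2 h3 h4 h5
  have hTA := RopZ_TL (K := K) (n := n) a (-(n:ℤ)-(i+1)) (-(n:ℤ)-i) (by ring) (by omega) (by omega)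
  have hTB := RopZ_TL (K := K) (n := n) b (-(n:ℤ)+i) (-(n:ℤ)+(i+1)) (by ring) (by omega) (by omega)
  have hTC := RopZ_TL (K := K) (n := n) c ((n:ℤ)-(i+1)) ((n:ℤ)-i) (by ring) (by omega) (by omega)
  have hTD := RopZ_TL (K := K) (n := n) d ((n:ℤ)+i) ((n:ℤ)+(i+1)) (by ring) (by omega) (by omega)
  obtain ⟨hA2, hA1⟩ := hTA
  obtain ⟨hB1, hB2⟩ := hTB
  obtain ⟨hC2, hC1⟩ := hTC
  obtain ⟨hD1, hD2⟩ := hTD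
  simp only [← Module.End.mul_eq_comp] at hA1 hA2 hB1 hB2 hC1 hC2 hD1 hD2
  constructor
  · show RU n a b c d i * (RU n a b c d (i+1) * RU n a b c d i) = RU n a b c d i
    simp only [RU, ← Module.End.mul_eq_comp]
    exact assemble _ _ _ _ _ _ _ _ hA1 hB1 hC1 hD1
      (com a b _ _ (by omega) (by omega) (by omega) (by omega) (by omega))
      (com a b _ _ (by omega) (by omega) (by omega) (by omega) (by omega))
      (com a b _ _ (by omega) (by omega) (by omega) (by omega) (by omega))
      (com a b _ _ (by omega) (by omega) (by omega) (by omega) (by omega))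
      (com a c _ _ (by omega) (by omega) (by omega) (by omega) (by omega))
      (com a c _ _ (by omega) (by omega) (by omega) (by omega) (by omega))
      (com a c _ _ (by omega) (by omega) (by omega) (by omega) (by omega))
      (com a c _ _ (by omega) (by omega) (by omega) (by omega) (by omega))
      (com a d _ _ (by omega) (by omega) (by omega) (by omega) (by omega))
      (com a d _ _ (by omega) (by omega) (by omega) (by omega) (by omega))
      (com a d _ _ (by omega) (by omega) (by omega) (by omega) (by omega))
      (com a d _ _ (by omega) (by omega) (by omega) (by omega) (by omega))
      (com b c _ _ (by omega) (by omega) (by omega) (by omega) (by omega))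
      (com b c _ _ (by omega) (by omega) (by omega) (by omega) (by omega))
      (com b c _ _ (by omega) (by omega) (by omega) (by omega) (by omega))
      (com b c _ _ (by omega) (by omega) (by omega) (by omega) (by omega))
      (com b d _ _ (by omega) (by omega) (by omega) (by omega) (by omega))
      (com b d _ _ (by omega) (by omega) (by omega) (by omega) (by omega))
      (com b d _ _ (by omega) (by omega) (by omega) (by omega) (by omega))
      (com b d _ _ (by omega) (by omega) (by omega) (by omega) (by omega))
      (com c d _ _ (by omega) (by omega) (by omega) (by omega) (by omega))
      (com c d _ _ (by omega) (by omega) (by omega) (by omega) (by omega))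
      (com c d _ _ (by omega) (by omega) (by omega) (by omega) (by omega))
      (com c d _ _ (by omega) (by omega) (by omega) (by omega) (by omega))
  · show RU n a b c d (i+1) * (RU n a b c d i * RU n a b c d (i+1)) = RU n a b c d (i+1)
    simp only [RU, ← Module.End.mul_eq_comp]
    exact assemble _ _ _ _ _ _ _ _ hA2 hB2 hC2 hD2
      (com a b _ _ (by omega) (by omega) (by omega) (by omega) (by omega))
      (com a b _ _ (by omega) (by omega) (by omega) (by omega) (by omega))
      (com a b _ _ (by omega) (by omega) (by omega) (by omega) (by omega))
      (com a b _ _ (by omega) (by omega) (by omega) (by omega) (by omega))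
      (com a c _ _ (by omega) (by omega) (by omega) (by omega) (by omega))
      (com a c _ _ (by omega) (by omega) (by omega) (by omega) (by omega))
      (com a c _ _ (by omega) (by omega) (by omega) (by omega) (by omega))
      (com a c _ _ (by omega) (by omega) (by omega) (by omega) (by omega))
      (com a d _ _ (by omega) (by omega) (by omega) (by omega) (by omega))
      (com a d _ _ (by omega) (by omega) (by omega) (by omega) (by omega))
      (com a d _ _ (by omega) (by omega) (by omega) (by omega) (by omega))
      (com a d _ _ (by omega) (by omega) (by omega) (by omega) (by omega))
      (com b c _ _ (by omega) (by omega) (by omega) (by omega) (by omega))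
      (com b c _ _ (by omega) (by omega) (by omega) (by omega) (by omega))
      (com b c _ _ (by omega) (by omega) (by omega) (by omega) (by omega))
      (com b c _ _ (by omega) (by omega) (by omega) (by omega) (by omega))
      (com b d _ _ (by omega) (by omega) (by omega) (by omega) (by omega))
      (com b d _ _ (by omega) (by omega) (by omega) (by omega) (by omega))
      (com b d _ _ (by omega) (by omega) (by omega) (by omega) (by omega))
      (com b d _ _ (by omega) (by omega) (by omega) (by omega) (by omega))
      (com c d _ _ (by omega) (by omega) (by omega) (by omega) (by omega))
      (com c d _ _ (by omega) (by omega) (by omega) (by omega) (by omega))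
      (com c d _ _ (by omega) (by omega) (by omega) (by omega) (by omega))
      (com c d _ _ (by omega) (by omega) (by omega) (by omega) (by omega))
end

section
/- Suppose n ≥ 2. Then for all a, b, c, d, x, y, z, w ∈ Kˣ: ℛ(U_{n−1}) ∘ ℛ(f) ∘ ℛ(U_{n−1}) = κ_R·ℛ(U_{n−1}), where κ_R = (ad·w⁻¹ + w·(ad)⁻¹)·(bc·z⁻¹ + z·(bc)⁻¹). -/
noncomputable def Eop {K : Type*} [Field K] {n : ℕ} (u : Kˣ) (p q : Pos n) :
    Vn K n →ₗ[K] Vn K n :=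
  Finsupp.linearCombination K (fun α : Idx n =>
    if α p = α q then 0
    else ((u ^ (2 - lv (α p)) : Kˣ) : K) •
           Finsupp.single (Function.update (Function.update α p 0) q 1) (1 : K) +
         ((u ^ (1 - lv (α p)) : Kˣ) : K) •
           Finsupp.single (Function.update (Function.update α p 1) q 0) (1 : K))

lemma Eop_single {K : Type*} [Field K] {n : ℕ} (u : Kˣ) (p q : Pos n) (α : Idx n) (b : K) :
    Eop u p q (Finsupp.single α b) =
      b • if α p = α q then 0
      else ((u ^ (2 - lv (α p)) : Kˣ) : K) •
             Finsupp.single (Function.update (Function.update α p 0) q 1) (1 : K) +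
           ((u ^ (1 - lv (α p)) : Kˣ) : K) •
             Finsupp.single (Function.update (Function.update α p 1) q 0) (1 : K) := by
  simp [Eop, Finsupp.linearCombination_single]

def upd4 {n : ℕ} (p1 p2 p3 p4 : Pos n) (v1 v2 v3 v4 : Fin 2) (α : Idx n) : Idx n :=
  fun i => if i = p1 then v1 else if i = p2 then v2 else if i = p3 then v3
           else if i = p4 then v4 else α i

section Upd
variable {n : ℕ} {p1 p2 p3 p4 : Pos n}
  {v1 v2 v3 v4 u1 u2 : Fin 2} {α : Idx n}

def PD (p1 p2 p3 p4 : Pos n) : Prop :=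
  p1 ≠ p2 ∧ p1 ≠ p3 ∧ p1 ≠ p4 ∧ p2 ≠ p3 ∧ p2 ≠ p4 ∧ p3 ≠ p4

variable (H : PD p1 p2 p3 p4)

lemma upd4_r1 (H : PD p1 p2 p3 p4) : upd4 p1 p2 p3 p4 v1 v2 v3 v4 α p1 = v1 := by simp [upd4]
lemma upd4_r2 (H : PD p1 p2 p3 p4) : upd4 p1 p2 p3 p4 v1 v2 v3 v4 α p2 = v2 := by obtain ⟨h12,h13,h14,h23,h24,h34⟩ := H; simp [upd4, h12.symm]
lemma upd4_r3 (H : PD p1 p2 p3 p4) : upd4 p1 p2 p3 p4 v1 v2 v3 v4 α p3 = v3 := by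
  obtain ⟨h12,h13,h14,h23,h24,h34⟩ := H
  simp [upd4, h13.symm, h23.symm]
lemma upd4_r4 (H : PD p1 p2 p3 p4) : upd4 p1 p2 p3 p4 v1 v2 v3 v4 α p4 = v4 := by
  obtain ⟨h12,h13,h14,h23,h24,h34⟩ := H
  simp [upd4, h14.symm, h24.symm, h34.symm]

lemma upd4_w12 (H : PD p1 p2 p3 p4) :
    Function.update (Function.update (upd4 p1 p2 p3 p4 v1 v2 v3 v4 α) p1 u1) p2 u2
      = upd4 p1 p2 p3 p4 u1 u2 v3 v4 α := by
  obtain ⟨h12,h13,h14,h23,h24,h34⟩ := H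
  funext i
  simp only [Function.update_apply, upd4]
  split_ifs <;> simp_all

lemma upd4_w34 (H : PD p1 p2 p3 p4) :
    Function.update (Function.update (upd4 p1 p2 p3 p4 v1 v2 v3 v4 α) p3 u1) p4 u2
      = upd4 p1 p2 p3 p4 v1 v2 u1 u2 α := by
  obtain ⟨h12,h13,h14,h23,h24,h34⟩ := H
  funext i
  simp only [Function.update_apply, upd4]
  split_ifs <;> simp_all

lemma upd4_w23 (H : PD p1 p2 p3 p4) :
    Function.update (Function.update (upd4 p1 p2 p3 p4 v1 v2 v3 v4 α) p2 u1) p3 u2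
      = upd4 p1 p2 p3 p4 v1 u1 u2 v4 α := by
  obtain ⟨h12,h13,h14,h23,h24,h34⟩ := H
  funext i
  simp only [Function.update_apply, upd4]
  split_ifs <;> simp_all

lemma single_eq_upd4 {K : Type*} [Field K] {b : K} (H : PD p1 p2 p3 p4) (h1 : α p1 = v1) (h2 : α p2 = v2)
    (h3 : α p3 = v3) (h4 : α p4 = v4) :
    Finsupp.single α (b:K) = Finsupp.single (upd4 p1 p2 p3 p4 v1 v2 v3 v4 α) b := by
  obtain ⟨h12,h13,h14,h23,h24,h34⟩ := H
  congr 1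
  funext i
  simp only [upd4]
  split_ifs <;> simp_all

end Upd

lemma fin01 : ((0 : Fin 2) = 1) ↔ False := by decide
lemma fin10 : ((1 : Fin 2) = 0) ↔ False := by decide
lemma lv0 : lv 0 = 1 := rfl
lemma lv1 : lv 1 = 2 := rfl

set_option maxHeartbeats 2000000 in
lemma TL {K : Type*} [Field K] {n : ℕ} {p1 p2 p3 p4 : Pos n} (H : PD p1 p2 p3 p4)
    (a d w : Kˣ) :
    Eop a p3 p4 ∘ₗ Eop d p1 p2 ∘ₗ Eop w p2 p3 ∘ₗ Eop a p3 p4 ∘ₗ Eop d p1 p2 =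
      (((a * d : Kˣ) : K) * ((w⁻¹ : Kˣ) : K) + (w : K) * (((a * d)⁻¹ : Kˣ) : K)) •
        (Eop a p3 p4 ∘ₗ Eop d p1 p2) := by
  apply Finsupp.lhom_ext
  intro α b
  obtain ⟨v1, h1⟩ : ∃ v, α p1 = v := ⟨_, rfl⟩
  obtain ⟨v2, h2⟩ : ∃ v, α p2 = v := ⟨_, rfl⟩
  obtain ⟨v3, h3⟩ : ∃ v, α p3 = v := ⟨_, rfl⟩
  obtain ⟨v4, h4⟩ : ∃ v, α p4 = v := ⟨_, rfl⟩
  simp only [LinearMap.comp_apply, LinearMap.smul_apply]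
  rw [single_eq_upd4 (K := K) H h1 h2 h3 h4]
  have two : ∀ t : Fin 2, t = 0 ∨ t = 1 := by decide
  rcases two v1 with rfl | rfl <;> rcases two v2 with rfl | rfl <;>
    rcases two v3 with rfl | rfl <;> rcases two v4 with rfl | rfl <;>
  · simp only [Eop_single, upd4_r1 H, upd4_r2 H, upd4_r3 H, upd4_r4 H,
      upd4_w12 H, upd4_w34 H, upd4_w23 H, map_add, map_smul, smul_add, smul_smul,
      smul_zero, map_zero, add_zero, zero_add, lv0, lv1, fin01, fin10,
      eq_self_iff_true, if_true, if_false,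
      Int.reduceSub, zpow_one, zpow_zero, zpow_neg_one, Units.val_one, one_smul,
      Units.val_mul, Units.val_inv_eq_inv_val, one_mul, mul_one]
    try (match_scalars <;> (try field_simp) <;> (try ring) <;> (try tauto))

set_option maxHeartbeats 2000000 in
lemma Eop_comm {K : Type*} [Field K] {n : ℕ} {p1 p2 p3 p4 : Pos n}
    (H : PD p1 p2 p3 p4) (u v : Kˣ) :
    Eop u p1 p2 ∘ₗ Eop v p3 p4 = Eop v p3 p4 ∘ₗ Eop u p1 p2 := by
  apply Finsupp.lhom_ext
  intro α b
  obtain ⟨v1, h1⟩ : ∃ t, α p1 = t := ⟨_, rfl⟩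
  obtain ⟨v2, h2⟩ : ∃ t, α p2 = t := ⟨_, rfl⟩
  obtain ⟨v3, h3⟩ : ∃ t, α p3 = t := ⟨_, rfl⟩
  obtain ⟨v4, h4⟩ : ∃ t, α p4 = t := ⟨_, rfl⟩
  simp only [LinearMap.comp_apply]
  rw [single_eq_upd4 (K := K) H h1 h2 h3 h4]
  have two : ∀ t : Fin 2, t = 0 ∨ t = 1 := by decide
  rcases two v1 with rfl | rfl <;> rcases two v2 with rfl | rfl <;>
    rcases two v3 with rfl | rfl <;> rcases two v4 with rfl | rfl <;>
  · simp only [Eop_single, upd4_r1 H, upd4_r2 H, upd4_r3 H, upd4_r4 H,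
      upd4_w12 H, upd4_w34 H, upd4_w23 H, map_add, map_smul, smul_add, smul_smul,
      smul_zero, map_zero, add_zero, zero_add, lv0, lv1, fin01, fin10,
      eq_self_iff_true, if_true, if_false,
      Int.reduceSub, zpow_one, zpow_zero, zpow_neg_one, Units.val_one, one_smul,
      Units.val_mul, Units.val_inv_eq_inv_val, one_mul, mul_one]
    try (match_scalars <;> (try field_simp) <;> (try ring) <;> (try tauto))

lemma Rop_eq_Eop {K : Type*} [Field K] (n : ℕ) (q : Kˣ) (i : Pos n) :
    Rop n q i = Eop q i (nxt i) := rfl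

lemma RopZ_eq_Eop {K : Type*} [Field K] (n : ℕ) (q : Kˣ) (j : ℤ)
    (hj : j ∈ Set.Icc (-2 * (n : ℤ) + 1) (2 * (n : ℤ))) (p' : Pos n)
    (hp' : nxt ⟨j, hj⟩ = p') :
    RopZ n q j = Eop q (⟨j, hj⟩ : Pos n) p' := by
  rw [RopZ, dif_pos (⟨hj.1, hj.2⟩ : _ ∧ _), Rop_eq_Eop, hp']


set_option maxHeartbeats 1000000 in
/-- For `n ≥ 2`, `ℛ(U_{n−1})∘ℛ(f)∘ℛ(U_{n−1}) = κ_R·ℛ(U_{n−1})` where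
`κ_R = (ad·w⁻¹ + w·(ad)⁻¹)·(bc·z⁻¹ + z·(bc)⁻¹)`. -/
theorem RU_Rf_RU {K : Type*} [Field K] (n : ℕ) (hn : 2 ≤ n)
    (a b c d x y z w : Kˣ) :
    RU (K := K) n a b c d ((n : ℤ) - 1) ∘ₗ Rf n z w ∘ₗ RU n a b c d ((n : ℤ) - 1) =
      ((((a * d : Kˣ) : K) * ((w⁻¹ : Kˣ) : K) + (w : K) * (((a * d)⁻¹ : Kˣ) : K)) *
       (((b * c : Kˣ) : K) * ((z⁻¹ : Kˣ) : K) + (z : K) * (((b * c)⁻¹ : Kˣ) : K))) •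
        RU n a b c d ((n : ℤ) - 1) := by
  have hn' : (2 : ℤ) ≤ (n : ℤ) := by exact_mod_cast hn
  -- memberships
  have q1 : (-2*(n:ℤ)+1) ∈ Set.Icc (-2 * (n : ℤ) + 1) (2 * (n : ℤ)) := by constructor <;> omega
  have q2 : (-2*(n:ℤ)+2) ∈ Set.Icc (-2 * (n : ℤ) + 1) (2 * (n : ℤ)) := by constructor <;> omega
  have q3 : (-1:ℤ) ∈ Set.Icc (-2 * (n : ℤ) + 1) (2 * (n : ℤ)) := by constructor <;> omega
  have q4 : (0:ℤ) ∈ Set.Icc (-2 * (n : ℤ) + 1) (2 * (n : ℤ)) := by constructor <;> omega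
  have q5 : (1:ℤ) ∈ Set.Icc (-2 * (n : ℤ) + 1) (2 * (n : ℤ)) := by constructor <;> omega
  have q6 : (2:ℤ) ∈ Set.Icc (-2 * (n : ℤ) + 1) (2 * (n : ℤ)) := by constructor <;> omega
  have q7 : (2*(n:ℤ)-1) ∈ Set.Icc (-2 * (n : ℤ) + 1) (2 * (n : ℤ)) := by constructor <;> omega
  have q8 : (2*(n:ℤ)) ∈ Set.Icc (-2 * (n : ℤ) + 1) (2 * (n : ℤ)) := by constructor <;> omega
  -- nxt computations
  have nA : nxt (⟨-2*(n:ℤ)+1, q1⟩ : Pos n) = (⟨-2*(n:ℤ)+2, q2⟩ : Pos n) := by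
    unfold nxt; rw [dif_neg (show ¬(-2*(n:ℤ)+1 = 2*(n:ℤ)) by omega)]
    exact Subtype.ext (by show (-2*(n:ℤ)+1)+1 = -2*(n:ℤ)+2; ring)
  have nB : nxt (⟨-1, q3⟩ : Pos n) = (⟨0, q4⟩ : Pos n) := by
    unfold nxt; rw [dif_neg (show ¬((-1:ℤ) = 2*(n:ℤ)) by omega)]
    exact Subtype.ext (by show (-1:ℤ)+1 = 0; ring)
  have nC : nxt (⟨1, q5⟩ : Pos n) = (⟨2, q6⟩ : Pos n) := by
    unfold nxt; rw [dif_neg (show ¬((1:ℤ) = 2*(n:ℤ)) by omega)]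
    exact Subtype.ext (by show (1:ℤ)+1 = 2; ring)
  have nD : nxt (⟨2*(n:ℤ)-1, q7⟩ : Pos n) = (⟨2*(n:ℤ), q8⟩ : Pos n) := by
    unfold nxt; rw [dif_neg (show ¬(2*(n:ℤ)-1 = 2*(n:ℤ)) by omega)]
    exact Subtype.ext (by show (2*(n:ℤ)-1)+1 = 2*(n:ℤ); ring)
  have nZ : nxt (⟨0, q4⟩ : Pos n) = (⟨1, q5⟩ : Pos n) := by
    unfold nxt; rw [dif_neg (show ¬((0:ℤ) = 2*(n:ℤ)) by omega)]
    exact Subtype.ext (by show (0:ℤ)+1 = 1; ring)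
  have nW : nxt (⟨2*(n:ℤ), q8⟩ : Pos n) = (⟨-2*(n:ℤ)+1, q1⟩ : Pos n) := by
    unfold nxt; rw [dif_pos (show ((⟨2*(n:ℤ), q8⟩ : Pos n) : ℤ) = 2*(n:ℤ) from rfl)]
  -- operators
  have hA := RopZ_eq_Eop (K := K) n a (-2*(n:ℤ)+1) q1 _ nA
  have hB := RopZ_eq_Eop (K := K) n b (-1) q3 _ nB
  have hC := RopZ_eq_Eop (K := K) n c 1 q5 _ nC
  have hD := RopZ_eq_Eop (K := K) n d (2*(n:ℤ)-1) q7 _ nD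
  have hZ := RopZ_eq_Eop (K := K) n z 0 q4 _ nZ
  have hW := RopZ_eq_Eop (K := K) n w (2*(n:ℤ)) q8 _ nW
  have ea : -(n:ℤ) - ((n:ℤ)-1) = -2*(n:ℤ)+1 := by ring
  have eb : -(n:ℤ) + ((n:ℤ)-1) = -1 := by ring
  have ec : (n:ℤ) - ((n:ℤ)-1) = 1 := by ring
  have ed : (n:ℤ) + ((n:ℤ)-1) = 2*(n:ℤ)-1 := by ring
  simp only [RU, Rf, ea, eb, ec, ed, hA, hB, hC, hD, hZ, hW]
  -- distinctness packs
  have mkne : ∀ (i j : ℤ) (hi : i ∈ Set.Icc (-2 * (n : ℤ) + 1) (2 * (n : ℤ)))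
      (hj : j ∈ Set.Icc (-2 * (n : ℤ) + 1) (2 * (n : ℤ))), i ≠ j →
      (⟨i, hi⟩ : Pos n) ≠ ⟨j, hj⟩ := by
    intro i j hi hj hij h
    exact hij (congrArg Subtype.val h)
  have H1 : PD (⟨2*(n:ℤ)-1, q7⟩ : Pos n) ⟨2*(n:ℤ), q8⟩ ⟨-2*(n:ℤ)+1, q1⟩ ⟨-2*(n:ℤ)+2, q2⟩ :=
    ⟨mkne _ _ _ _ (by omega), mkne _ _ _ _ (by omega), mkne _ _ _ _ (by omega),
     mkne _ _ _ _ (by omega), mkne _ _ _ _ (by omega), mkne _ _ _ _ (by omega)⟩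
  have H2 : PD (⟨-1, q3⟩ : Pos n) ⟨0, q4⟩ ⟨1, q5⟩ ⟨2, q6⟩ :=
    ⟨mkne _ _ _ _ (by omega), mkne _ _ _ _ (by omega), mkne _ _ _ _ (by omega),
     mkne _ _ _ _ (by omega), mkne _ _ _ _ (by omega), mkne _ _ _ _ (by omega)⟩
  have mkPD : ∀ (i1 i2 i3 i4 : ℤ) (g1 : i1 ∈ Set.Icc (-2 * (n : ℤ) + 1) (2 * (n : ℤ)))
      (g2 : i2 ∈ Set.Icc (-2 * (n : ℤ) + 1) (2 * (n : ℤ)))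
      (g3 : i3 ∈ Set.Icc (-2 * (n : ℤ) + 1) (2 * (n : ℤ)))
      (g4 : i4 ∈ Set.Icc (-2 * (n : ℤ) + 1) (2 * (n : ℤ))),
      i1 ≠ i2 → i1 ≠ i3 → i1 ≠ i4 → i2 ≠ i3 → i2 ≠ i4 → i3 ≠ i4 →
      PD (⟨i1,g1⟩ : Pos n) ⟨i2,g2⟩ ⟨i3,g3⟩ ⟨i4,g4⟩ := by
    intro i1 i2 i3 i4 g1 g2 g3 g4 e1 e2 e3 e4 e5 e6
    exact ⟨mkne _ _ _ _ e1, mkne _ _ _ _ e2, mkne _ _ _ _ e3,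
      mkne _ _ _ _ e4, mkne _ _ _ _ e5, mkne _ _ _ _ e6⟩
  -- pointwise commutation rules (move group-1 ops {A,D,W} outward past {B,C,Z})
  have sw : ∀ (u v : Kˣ) (r1 r2 r3 r4 : Pos n), PD r1 r2 r3 r4 →
      ∀ s : Vn K n, Eop u r1 r2 (Eop v r3 r4 s) = Eop v r3 r4 (Eop u r1 r2 s) := by
    intro u v r1 r2 r3 r4 H s
    exact LinearMap.congr_fun (Eop_comm H u v) s
  apply LinearMap.ext; intro s
  simp only [LinearMap.comp_apply, LinearMap.smul_apply]
  simp only [sw b a _ _ _ _ (mkPD (-1) 0 (-2*(n:ℤ)+1) (-2*(n:ℤ)+2) q3 q4 q1 q2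
      (by omega) (by omega) (by omega) (by omega) (by omega) (by omega)),
    sw b d _ _ _ _ (mkPD (-1) 0 (2*(n:ℤ)-1) (2*(n:ℤ)) q3 q4 q7 q8
      (by omega) (by omega) (by omega) (by omega) (by omega) (by omega)),
    sw b w _ _ _ _ (mkPD (-1) 0 (2*(n:ℤ)) (-2*(n:ℤ)+1) q3 q4 q8 q1
      (by omega) (by omega) (by omega) (by omega) (by omega) (by omega)),
    sw c a _ _ _ _ (mkPD 1 2 (-2*(n:ℤ)+1) (-2*(n:ℤ)+2) q5 q6 q1 q2
      (by omega) (by omega) (by omega) (by omega) (by omega) (by omega)),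
    sw c d _ _ _ _ (mkPD 1 2 (2*(n:ℤ)-1) (2*(n:ℤ)) q5 q6 q7 q8
      (by omega) (by omega) (by omega) (by omega) (by omega) (by omega)),
    sw c w _ _ _ _ (mkPD 1 2 (2*(n:ℤ)) (-2*(n:ℤ)+1) q5 q6 q8 q1
      (by omega) (by omega) (by omega) (by omega) (by omega) (by omega)),
    sw z a _ _ _ _ (mkPD 0 1 (-2*(n:ℤ)+1) (-2*(n:ℤ)+2) q4 q5 q1 q2
      (by omega) (by omega) (by omega) (by omega) (by omega) (by omega)),
    sw z d _ _ _ _ (mkPD 0 1 (2*(n:ℤ)-1) (2*(n:ℤ)) q4 q5 q7 q8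
      (by omega) (by omega) (by omega) (by omega) (by omega) (by omega)),
    sw z w _ _ _ _ (mkPD 0 1 (2*(n:ℤ)) (-2*(n:ℤ)+1) q4 q5 q8 q1
      (by omega) (by omega) (by omega) (by omega) (by omega) (by omega))]
  simp only [sw b c _ _ _ _ (mkPD (-1) 0 1 2 q3 q4 q5 q6
      (by omega) (by omega) (by omega) (by omega) (by omega) (by omega))]
  have tl1 := fun s => LinearMap.congr_fun (TL (K := K) H1 a d w) s
  have tl2 := fun s => LinearMap.congr_fun (TL (K := K) H2 c b z) s
  simp only [LinearMap.comp_apply, LinearMap.smul_apply] at tl1 tl2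
  rw [tl2, map_smul, map_smul, map_smul, map_smul, map_smul, tl1, smul_smul]
  congr 1
  simp only [Units.val_mul, mul_inv_rev, Units.val_inv_eq_inv_val]
  ring
end
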